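/- arXiv:1910.06199 — 8 statements merged into one kernel-verified Lean document; each statement's English description precedes it below -/
import Mathlib

section
/- In ℝ^{p,q} with p,q ≥ 1, the translates v1 + U_S and v2 + U_T (where U_S = {q>0}, U_T = {q<0}) are disjoint if and only if v1 = v2. -/
/-- The standard symmetric bilinear form of signature `(p,q)` on `ℝⁿ`, `n = p + q`. -/
noncomputable def formB (p q : ℕ) (v w : Fin (p + q) → ℝ) : ℝ :=
  ∑ i : Fin (p + q), (if (i : ℕ) < p then -(v i * w i) else v i * w i)

lemma formB_add_self (p q : ℕ) (v w : Fin (p + q) → ℝ) :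
    formB p q (v + w) (v + w) = formB p q v v + 2 * formB p q v w + formB p q w w := by
  unfold formB
  rw [Finset.mul_sum, ← Finset.sum_add_distrib, ← Finset.sum_add_distrib]
  refine Finset.sum_congr rfl fun k _ => ?_
  by_cases h : (k : ℕ) < p <;> simp [h, Pi.add_apply] <;> ring

lemma formB_pair (p q : ℕ) (i j : Fin (p + q)) (hij : i ≠ j) (a b : ℝ)
    (w : Fin (p + q) → ℝ) :
    formB p q (fun k => if k = i then a else if k = j then b else 0) w
      = (if (i : ℕ) < p then -(a * w i) else a * w i)
        + (if (j : ℕ) < p then -(b * w j) else b * w j) := by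
  unfold formB
  rw [← Finset.sum_subset (Finset.subset_univ ({i, j} : Finset (Fin (p + q))))
      (fun k _ hk => ?_)]
  · rw [Finset.sum_pair hij]
    simp [hij.symm]
  · simp only [Finset.mem_insert, Finset.mem_singleton, not_or] at hk
    simp [hk.1, hk.2]

/-- For `p, q ≥ 1`, the translates `v1 + U_S` and `v2 + U_T` are disjoint
if and only if `v1 = v2`. -/
theorem translates_US_UT_disjoint_iff (p q : ℕ) (hp : 1 ≤ p) (hq : 1 ≤ q)
    (v1 v2 : Fin (p + q) → ℝ) :
    {w | formB p q (w - v1) (w - v1) > 0} ∩ {w | formB p q (w - v2) (w - v2) < 0} = ∅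
      ↔ v1 = v2 := by
  constructor
  · intro hEmpty
    by_contra hne
    set d : Fin (p + q) → ℝ := v1 - v2 with hd
    have hd0 : d ≠ 0 := sub_ne_zero_of_ne hne
    obtain ⟨k, hk⟩ : ∃ k, d k ≠ 0 := Function.ne_iff.mp hd0
    set i : Fin (p + q) := if (k : ℕ) < p then k else ⟨0, by omega⟩ with hi_def
    set j : Fin (p + q) := if (k : ℕ) < p then ⟨p, by omega⟩ else k with hj_def
    have hi : (i : ℕ) < p := by
      by_cases h : (k : ℕ) < p <;> simp [hi_def, h] <;> omega
    have hj : ¬ ((j : ℕ) < p) := by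
      by_cases h : (k : ℕ) < p <;> simp [hj_def, h] <;> omega
    have hij : i ≠ j := fun h => hj (h ▸ hi)
    set c : ℝ := |d i| + |d j| with hc_def
    have hc : 0 < c := by
      by_cases h : (k : ℕ) < p
      · have : i = k := by simp [hi_def, h]
        have h1 : 0 < |d i| := by rw [this]; exact abs_pos.mpr hk
        have h2 : 0 ≤ |d j| := abs_nonneg _
        linarith
      · have : j = k := by simp [hj_def, h]
        have h1 : 0 < |d j| := by rw [this]; exact abs_pos.mpr hk
        have h2 : 0 ≤ |d i| := abs_nonneg _
        linarith
    set Qd : ℝ := formB p q d d with hQd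
    set R : ℝ := (|Qd| + 1) / c with hR_def
    have hRpos : 0 < R := by
      apply div_pos _ hc
      have := abs_nonneg Qd; linarith
    have hRc : R * c = |Qd| + 1 := div_mul_cancel₀ _ (ne_of_gt hc)
    set s : ℝ := Real.sqrt (1 + R ^ 2) with hs_def
    have hs2 : s ^ 2 = 1 + R ^ 2 := Real.sq_sqrt (by positivity)
    have hsnn : 0 ≤ s := Real.sqrt_nonneg _
    have hRs : R ≤ s := by nlinarith
    set a : ℝ := if 0 ≤ d j then -s else s with ha_def
    set b : ℝ := if 0 ≤ d i then R else -R with hb_def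
    have ha2 : a ^ 2 = s ^ 2 := by by_cases h : 0 ≤ d j <;> simp [ha_def, h] <;> ring
    have hb2 : b ^ 2 = R ^ 2 := by by_cases h : 0 ≤ d i <;> simp [hb_def, h] <;> ring
    have hadj : a * d j = -(s * |d j|) := by
      by_cases h : 0 ≤ d j
      · simp [ha_def, h, abs_of_nonneg h]; try ring
      · push_neg at h
        simp [ha_def, not_le.mpr h, abs_of_neg h]; try ring
    have hbdi : b * d i = R * |d i| := by
      by_cases h : 0 ≤ d i
      · simp [hb_def, h, abs_of_nonneg h]
      · push_neg at h
        simp [hb_def, not_le.mpr h, abs_of_neg h]; try ring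
    set u : Fin (p + q) → ℝ := fun m => if m = i then b else if m = j then a else 0 with hu
    have hui : u i = b := by simp [hu]
    have huj : u j = a := by simp [hu, hij.symm]
    have hQu : formB p q u u = 1 := by
      rw [hu, formB_pair p q i j hij b a u, if_pos hi, if_neg hj, hui, huj]
      nlinarith
    have hQud : formB p q u d = -(R * |d i| + s * |d j|) := by
      rw [hu, formB_pair p q i j hij b a d, if_pos hi, if_neg hj, hbdi, hadj]
      ring
    have hQud_le : formB p q u d ≤ -(R * c) := by
      rw [hQud, hc_def, mul_add]
      have h1 : R * |d j| ≤ s * |d j| := mul_le_mul_of_nonneg_right hRs (abs_nonneg _)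
      have habs := abs_nonneg Qd
      linarith
    have hneg : formB p q (u + d) (u + d) < 0 := by
      rw [formB_add_self]
      have hQd_le : Qd ≤ |Qd| := le_abs_self _
      rw [hQu, ← hQd]
      have : 2 * formB p q u d ≤ -2 * (|Qd| + 1) := by
        rw [← hRc]; linarith
      have habs := abs_nonneg Qd
      linarith
    have hw : (v1 + u) ∈ {w | formB p q (w - v1) (w - v1) > 0} ∩
        {w | formB p q (w - v2) (w - v2) < 0} := by
      constructor
      · have h1 : v1 + u - v1 = u := by abel
        simp only [Set.mem_setOf_eq, h1, hQu]; norm_num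
      · have h2 : v1 + u - v2 = u + d := by rw [hd]; abel
        simp only [Set.mem_setOf_eq, h2]
        exact hneg
    rw [hEmpty] at hw
    exact hw
  · intro h
    subst h
    rw [Set.eq_empty_iff_forall_notMem]
    rintro w ⟨h1, h2⟩
    simp only [Set.mem_setOf_eq] at h1 h2
    linarith
end

section
/- Let U1, U2 ⊂ ℝ^{p,q} (p,q ≥ 1) be two disjoint open sets, each of 'intersection type', i.e. each is either a translate of U_S = {q>0}, a translate of U_T = {q<0}, or a degenerate half-space H_{v,α} = {w : b(v,w) > α} with v isotropic nonzero. Then either both are degenerate half-spaces H_{v,α1}, H_{-v,α2} with the same isotropic direction and α1 ≥ -α2, or U1 = v + U_S and U2 = v + U_T with the same translation vector v. Moreover, any third open set U3 of intersection type must intersect U1 ∪ U2. -/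
/-- An open set of *intersection type*: a translate of `U_S = {q > 0}`, a translate of
`U_T = {q < 0}`, or a degenerate half-space `H_{v,α}` with `v` isotropic nonzero. -/
def InterType (p q : ℕ) (U : Set (Fin (p + q) → ℝ)) : Prop :=
  (∃ v, U = {w | formB p q (w - v) (w - v) > 0}) ∨
  (∃ v, U = {w | formB p q (w - v) (w - v) < 0}) ∨
  (∃ v α, v ≠ 0 ∧ formB p q v v = 0 ∧ U = {w | formB p q v w > α})

/-!
Each set of intersection type contains the points `a + t • y` for all large `t`, for suitable
directions `y`: any `y` with `q y > 0` for `a + U_S`, any `y` with `q y < 0` for `a + U_T`, and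
any `y` with `b v y > 0` for `H_{v,α}`. As `v` is isotropic and `b` nondegenerate, some `y` has
`b v y = 1` and `q y` of either sign, so most pairs of such sets meet. Two half-spaces
`H_{v,α}`, `H_{u,β}` meet unless `b u` is a negative multiple of `b v`, i.e. `u = c • v` with
`c < 0`; and `a + U_S` meets `b + U_T` whenever `a ≠ b`, by cases on the sign of `q (a - b)`.
The same intersection lemmas give the covering statement.
-/

open Filter Topology

section

variable {V : Type*} [AddCommGroup V] [Module ℝ V]

namespace LinearMap

theorem exists_apply_eq_one {f : V →ₗ[ℝ] ℝ} (hf : f ≠ 0) : ∃ z, f z = 1 := by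
  obtain ⟨z, hz⟩ : ∃ z, f z ≠ 0 := by
    by_contra! h
    exact hf (LinearMap.ext h)
  exact ⟨(f z)⁻¹ • z, by simp [hz]⟩

theorem exists_pos_pos_or_eq_neg_smul {f g : V →ₗ[ℝ] ℝ} (hf : f ≠ 0) (hg : g ≠ 0) :
    (∃ x, 0 < f x ∧ 0 < g x) ∨ ∃ c : ℝ, c < 0 ∧ g = c • f := by
  obtain ⟨z, hz⟩ := exists_apply_eq_one hf
  by_cases hker : ker f ≤ ker g
  · obtain ⟨c, rfl⟩ : ∃ c : ℝ, c • f = g := by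
      have := mem_span_of_iInf_ker_le_ker (L := fun _ : Unit => f) (K := g) (by simpa using hker)
      simpa [Submodule.mem_span_singleton] using this
    rcases (left_ne_zero_of_smul hg).lt_or_gt with hc | hc
    · exact Or.inr ⟨c, hc, rfl⟩
    · exact Or.inl ⟨z, by simp [hz], by simp [hz, hc]⟩
  · obtain ⟨x, hfx, hgx⟩ : ∃ x, f x = 0 ∧ g x ≠ 0 := by
      simpa [SetLike.le_def] using hker
    refine Or.inl ⟨z + ((1 - g z) / g x) • x, by simp [hz, hfx], ?_⟩
    simp [hgx]

namespace BilinForm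

variable (B : LinearMap.BilinForm ℝ V)

def spacelikeAt (a : V) : Set V := {w | 0 < B (w - a) (w - a)}

def timelikeAt (a : V) : Set V := {w | B (w - a) (w - a) < 0}

def halfSpace (v : V) (α : ℝ) : Set V := {w | α < B v w}

def IsIntersectionType (U : Set V) : Prop :=
  (∃ a, U = B.spacelikeAt a) ∨ (∃ a, U = B.timelikeAt a) ∨
    ∃ v α, v ≠ 0 ∧ B v v = 0 ∧ U = B.halfSpace v α

variable {B}

theorem timelikeAt_eq_spacelikeAt_neg (a : V) : B.timelikeAt a = (-B).spacelikeAt a := by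
  ext w
  simp [spacelikeAt, timelikeAt]

theorem halfSpace_smul_of_pos {c : ℝ} (hc : 0 < c) (v : V) (β : ℝ) :
    B.halfSpace (c • v) β = B.halfSpace v (β / c) := by
  ext w
  simp [halfSpace, div_lt_iff₀ hc, mul_comm]

theorem apply_smul_add_self (y c : V) (t : ℝ) :
    B (t • y + c) (t • y + c) = t * (t * B y y + (B y c + B c y)) + B c c := by
  simp only [map_add, map_smul, LinearMap.add_apply, LinearMap.smul_apply, smul_eq_mul]
  ring

theorem tendsto_apply_smul_add_self_atTop {y : V} (hy : 0 < B y y) (c : V) :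
    Tendsto (fun t : ℝ => B (t • y + c) (t • y + c)) atTop atTop := by
  simp only [apply_smul_add_self]
  exact tendsto_atTop_add_const_right _ _ <| tendsto_id.atTop_mul_atTop₀ <|
    tendsto_atTop_add_const_right _ _ <| tendsto_id.atTop_mul_const hy

theorem eventually_add_smul_mem_spacelikeAt {y : V} (hy : 0 < B y y) (a b : V) :
    ∀ᶠ t : ℝ in atTop, b + t • y ∈ B.spacelikeAt a := by
  have h (t : ℝ) : b + t • y - a = t • y + (b - a) := by abel
  simpa only [spacelikeAt, Set.mem_ofPred_eq, h] using
    (tendsto_apply_smul_add_self_atTop hy (b - a)).eventually_gt_atTop 0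

theorem eventually_add_smul_mem_timelikeAt {y : V} (hy : B y y < 0) (a b : V) :
    ∀ᶠ t : ℝ in atTop, b + t • y ∈ B.timelikeAt a := by
  rw [timelikeAt_eq_spacelikeAt_neg]
  exact eventually_add_smul_mem_spacelikeAt (by simpa using hy) a b

theorem eventually_add_smul_mem_halfSpace {v y : V} (hy : 0 < B v y) (a : V) (α : ℝ) :
    ∀ᶠ t : ℝ in atTop, a + t • y ∈ B.halfSpace v α := by
  have : Tendsto (fun t : ℝ => B v (a + t • y)) atTop atTop := by
    simp only [map_add, map_smul, smul_eq_mul]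
    exact tendsto_atTop_add_const_left _ _ (tendsto_id.atTop_mul_const hy)
  exact this.eventually_gt_atTop α

theorem spacelikeAt_inter_spacelikeAt_nonempty {e : V} (he : 0 < B e e) (a b : V) :
    (B.spacelikeAt a ∩ B.spacelikeAt b).Nonempty :=
  let ⟨_, ht⟩ := ((eventually_add_smul_mem_spacelikeAt he a a).and
    (eventually_add_smul_mem_spacelikeAt he b a)).exists
  ⟨_, ht⟩

theorem timelikeAt_inter_timelikeAt_nonempty {e : V} (he : B e e < 0) (a b : V) :
    (B.timelikeAt a ∩ B.timelikeAt b).Nonempty := by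
  simp only [timelikeAt_eq_spacelikeAt_neg]
  exact spacelikeAt_inter_spacelikeAt_nonempty (by simpa using he) a b

theorem apply_ne_zero (hB : B.SeparatingLeft) {v : V} (hv : v ≠ 0) : B v ≠ 0 :=
  fun h => hv (hB v fun w => by simp [h])

theorem exists_apply_eq_one_and_apply_self_eq (hB : B.SeparatingLeft) (hB' : B.IsSymm)
    {v : V} (hv : v ≠ 0) (hvv : B v v = 0) (c : ℝ) : ∃ y, B v y = 1 ∧ B y y = c := by
  obtain ⟨z, hz⟩ := exists_apply_eq_one (apply_ne_zero hB hv)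
  refine ⟨((c - B z z) / 2) • v + z, by simp [hvv, hz], ?_⟩
  rw [apply_smul_add_self, hvv, hz, hB'.eq z v, hz]
  ring

theorem exists_pos_and_add_neg_of_neg {e d : V} (he : 0 < B e e) (hd : B d d < 0) :
    ∃ x, 0 < B x x ∧ B (x + d) (x + d) < 0 := by
  have hlim : Tendsto (fun ε : ℝ => B (ε • e + d) (ε • e + d)) (𝓝[>] 0) (𝓝 (B d d)) := by
    have hcont : Continuous fun ε : ℝ => ε * (ε * B e e + (B e d + B d e)) + B d d := by
      fun_prop
    simpa only [apply_smul_add_self, zero_mul, zero_add] using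
      (hcont.tendsto 0).mono_left nhdsWithin_le_nhds
  have hpos : ∀ᶠ ε in 𝓝[>] (0 : ℝ), 0 < ε := eventually_mem_nhdsWithin
  obtain ⟨ε, hε, hneg⟩ := (hpos.and (hlim.eventually_lt_const hd)).exists
  refine ⟨ε • e, ?_, hneg⟩
  simpa only [map_smul, LinearMap.smul_apply, smul_eq_mul] using
    mul_pos hε (mul_pos hε he)

theorem exists_pos_and_add_neg (hB : B.SeparatingLeft) (hB' : B.IsSymm) {e f d : V}
    (he : 0 < B e e) (hf : B f f < 0) (hd : d ≠ 0) :
    ∃ x, 0 < B x x ∧ B (x + d) (x + d) < 0 := by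
  rcases lt_trichotomy (B d d) 0 with hneg | hzero | hpos
  · exact exists_pos_and_add_neg_of_neg he hneg
  · obtain ⟨y, hdy, hyy⟩ := exists_apply_eq_one_and_apply_self_eq hB hB' hd hzero 1
    refine ⟨-y, by simp [hyy], ?_⟩
    -- `q (-y + d) = q y - 2 b d y + q d = -1`
    have hexp := apply_smul_add_self (B := B) y d (-1)
    simp only [neg_one_smul, hyy, hdy, hzero, hB'.eq y d] at hexp
    linarith
  · -- the first case for `-B` and `-d`, where `f` has positive square
    obtain ⟨x, hx, hxd⟩ := exists_pos_and_add_neg_of_neg (B := -B) (e := f) (d := -d)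
      (by simpa using hf) (by simpa using hpos)
    exact ⟨x + -d, by simpa only [LinearMap.neg_apply, neg_lt_zero] using hxd,
      by simpa only [neg_add_cancel_right, LinearMap.neg_apply, neg_pos] using hx⟩

theorem spacelikeAt_inter_timelikeAt_nonempty (hB : B.SeparatingLeft) (hB' : B.IsSymm)
    {e f : V} (he : 0 < B e e) (hf : B f f < 0) {a b : V} (hab : a ≠ b) :
    (B.spacelikeAt a ∩ B.timelikeAt b).Nonempty := by
  obtain ⟨x, hx, hxd⟩ := exists_pos_and_add_neg hB hB' he hf (sub_ne_zero.mpr hab)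
  have hxb : a + x - b = x + (a - b) := by abel
  exact ⟨a + x, by simpa only [spacelikeAt, Set.mem_ofPred_eq, add_sub_cancel_left] using hx,
    by simpa only [timelikeAt, Set.mem_ofPred_eq, hxb] using hxd⟩

theorem spacelikeAt_inter_halfSpace_nonempty (hB : B.SeparatingLeft) (hB' : B.IsSymm)
    {v : V} (hv : v ≠ 0) (hvv : B v v = 0) (a : V) (α : ℝ) :
    (B.spacelikeAt a ∩ B.halfSpace v α).Nonempty := by
  obtain ⟨y, hvy, hyy⟩ := exists_apply_eq_one_and_apply_self_eq hB hB' hv hvv 1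
  obtain ⟨t, ht⟩ := ((eventually_add_smul_mem_spacelikeAt (hyy ▸ one_pos) a a).and
    (eventually_add_smul_mem_halfSpace (hvy ▸ one_pos) a α)).exists
  exact ⟨_, ht⟩

theorem timelikeAt_inter_halfSpace_nonempty (hB : B.SeparatingLeft) (hB' : B.IsSymm)
    {v : V} (hv : v ≠ 0) (hvv : B v v = 0) (a : V) (α : ℝ) :
    (B.timelikeAt a ∩ B.halfSpace v α).Nonempty := by
  obtain ⟨y, hvy, hyy⟩ := exists_apply_eq_one_and_apply_self_eq hB hB' hv hvv (-1)
  obtain ⟨t, ht⟩ := ((eventually_add_smul_mem_timelikeAt (by rw [hyy]; norm_num) a a).and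
    (eventually_add_smul_mem_halfSpace (hvy ▸ one_pos) a α)).exists
  exact ⟨_, ht⟩

theorem exists_neg_smul_of_disjoint_halfSpace (hB : B.SeparatingLeft) {v u : V} (hv : v ≠ 0)
    (hu : u ≠ 0) {α β : ℝ} (h : Disjoint (B.halfSpace v α) (B.halfSpace u β)) :
    ∃ c : ℝ, c < 0 ∧ u = c • v := by
  rcases exists_pos_pos_or_eq_neg_smul (apply_ne_zero hB hv) (apply_ne_zero hB hu) with
    ⟨y, hvy, huy⟩ | ⟨c, hc, hcu⟩
  · obtain ⟨t, ht⟩ := ((eventually_add_smul_mem_halfSpace hvy 0 α).and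
      (eventually_add_smul_mem_halfSpace huy 0 β)).exists
    exact absurd h (Set.not_disjoint_iff.mpr ⟨_, ht⟩)
  · refine ⟨c, hc, sub_eq_zero.mp (hB _ fun w => ?_)⟩
    simp [hcu]

theorem le_of_disjoint_halfSpace_neg (hB : B.SeparatingLeft) {v : V} (hv : v ≠ 0) {α β : ℝ}
    (h : Disjoint (B.halfSpace v α) (B.halfSpace (-v) β)) : -β ≤ α := by
  by_contra! hlt
  obtain ⟨z, hz⟩ := exists_apply_eq_one (apply_ne_zero hB hv)
  refine Set.not_disjoint_iff.mpr ⟨((α - β) / 2) • z, ?_, ?_⟩ h <;>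
    simp only [halfSpace, Set.mem_ofPred_eq, map_smul, map_neg, LinearMap.neg_apply, hz,
      smul_eq_mul] <;>
    linarith

theorem eq_halfSpace_neg_of_disjoint (hB : B.SeparatingLeft) {v u : V} (hv : v ≠ 0)
    (hu : u ≠ 0) {α β : ℝ} (h : Disjoint (B.halfSpace v α) (B.halfSpace u β)) :
    ∃ γ, B.halfSpace u β = B.halfSpace (-v) γ ∧ -γ ≤ α := by
  obtain ⟨c, hc, rfl⟩ := exists_neg_smul_of_disjoint_halfSpace hB hv hu h
  have hH : B.halfSpace (c • v) β = B.halfSpace (-v) (β / -c) := by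
    rw [show c • v = (-c) • -v by simp, halfSpace_smul_of_pos (neg_pos.mpr hc)]
  exact ⟨β / -c, hH, le_of_disjoint_halfSpace_neg hB hv (hH ▸ h)⟩

theorem halfSpace_inter_halfSpace_nonempty (hB : B.SeparatingLeft) {v : V} (hv : v ≠ 0)
    (α β : ℝ) : (B.halfSpace v α ∩ B.halfSpace v β).Nonempty := by
  obtain ⟨z, hz⟩ := exists_apply_eq_one (apply_ne_zero hB hv)
  obtain ⟨t, ht⟩ := ((eventually_add_smul_mem_halfSpace (hz ▸ one_pos) 0 α).and
    (eventually_add_smul_mem_halfSpace (hz ▸ one_pos) 0 β)).exists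
  exact ⟨_, ht⟩

variable {e f : V}

theorem IsIntersectionType.eq_of_disjoint (hB : B.SeparatingLeft) (hB' : B.IsSymm)
    (he : 0 < B e e) (hf : B f f < 0) {U₁ U₂ : Set V} (h₁ : B.IsIntersectionType U₁)
    (h₂ : B.IsIntersectionType U₂) (h : Disjoint U₁ U₂) :
    (∃ v α₁ α₂, v ≠ 0 ∧ B v v = 0 ∧ U₁ = B.halfSpace v α₁ ∧ U₂ = B.halfSpace (-v) α₂ ∧
      -α₂ ≤ α₁) ∨
    ∃ a, (U₁ = B.spacelikeAt a ∧ U₂ = B.timelikeAt a) ∨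
      (U₁ = B.timelikeAt a ∧ U₂ = B.spacelikeAt a) := by
  have hmeet : ¬(U₁ ∩ U₂).Nonempty := Set.not_nonempty_iff_eq_empty.mpr h.inter_eq
  rcases h₁ with ⟨a, rfl⟩ | ⟨a, rfl⟩ | ⟨v, α, hv, hvv, rfl⟩ <;>
    rcases h₂ with ⟨b, rfl⟩ | ⟨b, rfl⟩ | ⟨u, β, hu, huu, rfl⟩
  · exact (hmeet (spacelikeAt_inter_spacelikeAt_nonempty he a b)).elim
  · obtain rfl | hab := eq_or_ne a b
    · exact Or.inr ⟨a, Or.inl ⟨rfl, rfl⟩⟩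
    · exact (hmeet (spacelikeAt_inter_timelikeAt_nonempty hB hB' he hf hab)).elim
  · exact (hmeet (spacelikeAt_inter_halfSpace_nonempty hB hB' hu huu a β)).elim
  · obtain rfl | hab := eq_or_ne b a
    · exact Or.inr ⟨b, Or.inr ⟨rfl, rfl⟩⟩
    · rw [Set.inter_comm] at hmeet
      exact (hmeet (spacelikeAt_inter_timelikeAt_nonempty hB hB' he hf hab)).elim
  · exact (hmeet (timelikeAt_inter_timelikeAt_nonempty hf a b)).elim
  · exact (hmeet (timelikeAt_inter_halfSpace_nonempty hB hB' hu huu a β)).elim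
  · rw [Set.inter_comm] at hmeet
    exact (hmeet (spacelikeAt_inter_halfSpace_nonempty hB hB' hv hvv b α)).elim
  · rw [Set.inter_comm] at hmeet
    exact (hmeet (timelikeAt_inter_halfSpace_nonempty hB hB' hv hvv b α)).elim
  · obtain ⟨γ, hγ, hle⟩ := eq_halfSpace_neg_of_disjoint hB hv hu h
    exact Or.inl ⟨v, α, γ, hv, hvv, rfl, hγ, hle⟩

theorem IsIntersectionType.inter_union_spacelikeAt_timelikeAt_nonempty
    (hB : B.SeparatingLeft) (hB' : B.IsSymm) (he : 0 < B e e) (hf : B f f < 0) {U : Set V}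
    (hU : B.IsIntersectionType U) (a : V) :
    (U ∩ (B.spacelikeAt a ∪ B.timelikeAt a)).Nonempty := by
  rcases hU with ⟨b, rfl⟩ | ⟨b, rfl⟩ | ⟨u, β, hu, huu, rfl⟩
  · exact (spacelikeAt_inter_spacelikeAt_nonempty he b a).mono
      (Set.inter_subset_inter_right _ Set.subset_union_left)
  · exact (timelikeAt_inter_timelikeAt_nonempty hf b a).mono
      (Set.inter_subset_inter_right _ Set.subset_union_right)
  · rw [Set.inter_comm]
    exact (spacelikeAt_inter_halfSpace_nonempty hB hB' hu huu a β).mono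
      (Set.inter_subset_inter_left _ Set.subset_union_left)

theorem IsIntersectionType.inter_union_halfSpace_neg_nonempty (hB : B.SeparatingLeft)
    (hB' : B.IsSymm) {v : V} (hv : v ≠ 0) (hvv : B v v = 0) (α₁ α₂ : ℝ) {U : Set V}
    (hU : B.IsIntersectionType U) :
    (U ∩ (B.halfSpace v α₁ ∪ B.halfSpace (-v) α₂)).Nonempty := by
  rcases hU with ⟨b, rfl⟩ | ⟨b, rfl⟩ | ⟨u, β, hu, -, rfl⟩
  · exact (spacelikeAt_inter_halfSpace_nonempty hB hB' hv hvv b α₁).mono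
      (Set.inter_subset_inter_right _ Set.subset_union_left)
  · exact (timelikeAt_inter_halfSpace_nonempty hB hB' hv hvv b α₁).mono
      (Set.inter_subset_inter_right _ Set.subset_union_left)
  · by_cases h : Disjoint (B.halfSpace v α₁) (B.halfSpace u β)
    · obtain ⟨γ, hγ, -⟩ := eq_halfSpace_neg_of_disjoint hB hv hu h
      rw [hγ]
      exact (halfSpace_inter_halfSpace_nonempty hB (neg_ne_zero.mpr hv) γ α₂).mono
        (Set.inter_subset_inter_right _ Set.subset_union_right)
    · rw [Set.not_disjoint_iff_nonempty_inter, Set.inter_comm] at h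
      exact h.mono (Set.inter_subset_inter_right _ Set.subset_union_left)

end BilinForm

end LinearMap

end

open LinearMap.BilinForm

noncomputable def signatureForm (p q : ℕ) : LinearMap.BilinForm ℝ (Fin (p + q) → ℝ) :=
  Matrix.toBilin' (Matrix.diagonal fun i => if (i : ℕ) < p then -1 else 1)

theorem formB_eq_signatureForm (p q : ℕ) (v w : Fin (p + q) → ℝ) :
    formB p q v w = signatureForm p q v w := by
  simp only [formB, signatureForm, Matrix.toBilin'_apply', dotProduct, Matrix.mulVec_diagonal]
  refine Finset.sum_congr rfl fun i _ => ?_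
  split_ifs <;> ring

theorem signatureForm_isSymm (p q : ℕ) : (signatureForm p q).IsSymm :=
  ⟨fun v w => by
    simp only [← formB_eq_signatureForm, formB]
    refine Finset.sum_congr rfl fun i _ => ?_
    split_ifs <;> ring⟩

theorem signatureForm_separatingLeft (p q : ℕ) : (signatureForm p q).SeparatingLeft := by
  refine (nondegenerate_toBilin'_of_det_ne_zero' _ ?_).1
  rw [Matrix.det_diagonal, Finset.prod_ne_zero_iff]
  intro i _
  split_ifs <;> norm_num

theorem exists_signatureForm_pos {p q : ℕ} (hq : 1 ≤ q) :
    ∃ e, 0 < signatureForm p q e e :=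
  ⟨Pi.single ⟨p, by omega⟩ 1, by simp [signatureForm, Matrix.toBilin'_single]⟩

theorem exists_signatureForm_neg {p q : ℕ} (hp : 1 ≤ p) :
    ∃ f, signatureForm p q f f < 0 :=
  ⟨Pi.single ⟨0, by omega⟩ 1,
    by simp [signatureForm, Matrix.toBilin'_single, show 0 < p from hp]⟩

theorem interType_iff (p q : ℕ) (U : Set (Fin (p + q) → ℝ)) :
    InterType p q U ↔ (signatureForm p q).IsIntersectionType U := by
  simp only [InterType, IsIntersectionType, spacelikeAt, timelikeAt, halfSpace,
    formB_eq_signatureForm, gt_iff_lt]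

/-- Two disjoint open sets of intersection type are either two degenerate half-spaces
`H_{v,α1}`, `H_{-v,α2}` with the same isotropic direction and `α1 ≥ -α2`, or a translate
`v + U_S` together with the corresponding translate `v + U_T`. Moreover any third set of
intersection type meets their union. -/
theorem disjoint_intersection_type (p q : ℕ) (hp : 1 ≤ p) (hq : 1 ≤ q)
    (U1 U2 : Set (Fin (p + q) → ℝ)) (h1 : InterType p q U1) (h2 : InterType p q U2)
    (hdisj : U1 ∩ U2 = ∅) :
    ((∃ v α1 α2, v ≠ 0 ∧ formB p q v v = 0 ∧
        U1 = {w | formB p q v w > α1} ∧ U2 = {w | formB p q (-v) w > α2} ∧ α1 ≥ -α2) ∨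
      (∃ v, (U1 = {w | formB p q (w - v) (w - v) > 0} ∧
              U2 = {w | formB p q (w - v) (w - v) < 0}) ∨
            (U1 = {w | formB p q (w - v) (w - v) < 0} ∧
              U2 = {w | formB p q (w - v) (w - v) > 0}))) ∧
    (∀ U3, InterType p q U3 → (U3 ∩ (U1 ∪ U2)).Nonempty) := by
  have hB := signatureForm_separatingLeft p q
  have hB' := signatureForm_isSymm p q
  obtain ⟨e, he⟩ := exists_signatureForm_pos (p := p) hq
  obtain ⟨f, hf⟩ := exists_signatureForm_neg (q := q) hp
  rw [interType_iff] at h1 h2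
  simp only [interType_iff, formB_eq_signatureForm]
  have hpair := h1.eq_of_disjoint hB hB' he hf h2 (Set.disjoint_iff_inter_eq_empty.mpr hdisj)
  refine ⟨hpair, fun U3 h3 => ?_⟩
  rcases hpair with ⟨v, α1, α2, hv, hvv, rfl, rfl, -⟩ | ⟨a, ⟨rfl, rfl⟩ | ⟨rfl, rfl⟩⟩
  · exact h3.inter_union_halfSpace_neg_nonempty hB hB' hv hvv α1 α2
  · exact h3.inter_union_spacelikeAt_timelikeAt_nonempty hB hB' he hf a
  · rw [Set.union_comm]
    exact h3.inter_union_spacelikeAt_timelikeAt_nonempty hB hB' he hf a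
end

section
/- Let H₀ be an open hemisphere of the sphere Sⁿ (n ≥ 1), i.e. H₀ = {x ∈ Sⁿ : ℓ₀(x) > 0} for some nonzero linear functional ℓ₀ on ℝ^{n+1}. If (H_i)_{i∈I} is a family of open hemispheres such that the intersections H₀ ∩ H_i are nonempty and pairwise disjoint, then the index set I has cardinality at most 2. -/
/-!
Coning off the sphere, `H₀ ∩ Hᵢ` becomes the open cone `{ℓ₀ > 0, ℓᵢ > 0}`, and disjointness of
two such nonempty cones forces `ℓⱼ ≡ c ℓᵢ` modulo `ℓ₀` with `c < 0`: a vector of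
`ker ℓ₀ ∩ ker ℓᵢ` on which `ℓⱼ` does not vanish would push a point of the first cone into the
second. For three pairwise disjoint cones, composing `ℓⱼ ≡ c₁ ℓᵢ` and `ℓₖ ≡ c₃ ℓⱼ` with
`ℓₖ ≡ c₂ ℓᵢ` gives `(c₂ - c₃ c₁) ℓᵢ ≡ 0` with `c₂ - c₃ c₁ < 0`, so `ℓᵢ` is a multiple of `ℓ₀`;
then its cone is all of `{ℓ₀ > 0}` and swallows the others.
-/

open LinearMap

def hemisphere (n : ℕ) (ℓ : EuclideanSpace ℝ (Fin (n + 1)) →ₗ[ℝ] ℝ) :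
    Set (EuclideanSpace ℝ (Fin (n + 1))) :=
  {x | x ∈ Metric.sphere (0 : EuclideanSpace ℝ (Fin (n + 1))) 1 ∧ ℓ x > 0}

section Lune

variable {E : Type*} [AddCommGroup E] [Module ℝ E] {ℓ₀ f g h : E →ₗ[ℝ] ℝ}

/-- On `EuclideanSpace ℝ (Fin (n + 1))`, the open cone over `hemisphere n ℓ₀ ∩ hemisphere n f`. -/
def lune (ℓ₀ f : E →ₗ[ℝ] ℝ) : Set E := {x | 0 < ℓ₀ x ∧ 0 < f x}

lemma nonpos_of_mem_lune_of_disjoint (hfg : Disjoint (lune ℓ₀ f) (lune ℓ₀ g)) {x : E}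
    (hx : x ∈ lune ℓ₀ f) : g x ≤ 0 :=
  not_lt.1 fun hgx => Set.disjoint_left.1 hfg hx ⟨hx.1, hgx⟩

lemma eq_zero_of_forall_add_mul_nonpos {a b : ℝ} (h : ∀ t : ℝ, a + t * b ≤ 0) : b = 0 := by
  by_contra hb
  have := h ((1 - a) / b)
  rw [div_mul_cancel₀ _ hb] at this
  linarith

lemma ker_inf_ker_le_ker_of_disjoint_lune (hf : (lune ℓ₀ f).Nonempty)
    (hfg : Disjoint (lune ℓ₀ f) (lune ℓ₀ g)) : ker ℓ₀ ⊓ ker f ≤ ker g := by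
  obtain ⟨p, hp⟩ := hf
  intro x hx
  obtain ⟨hx₀, hxf⟩ := Submodule.mem_inf.1 hx
  rw [mem_ker] at hx₀ hxf ⊢
  refine eq_zero_of_forall_add_mul_nonpos (a := g p) fun t => ?_
  have hmem : p + t • x ∈ lune ℓ₀ f :=
    ⟨by simpa [hx₀] using hp.1, by simpa [hxf] using hp.2⟩
  simpa only [map_add, map_smul, smul_eq_mul] using nonpos_of_mem_lune_of_disjoint hfg hmem

lemma exists_eq_smul_add_smul_of_disjoint_lune (hf : (lune ℓ₀ f).Nonempty)
    (hg : (lune ℓ₀ g).Nonempty) (hfg : Disjoint (lune ℓ₀ f) (lune ℓ₀ g)) :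
    ∃ a c : ℝ, c < 0 ∧ g = a • ℓ₀ + c • f := by
  have hker : ⨅ i, ker (![ℓ₀, f] i) ≤ ker g := fun x hx => by
    rw [Submodule.mem_iInf] at hx
    exact ker_inf_ker_le_ker_of_disjoint_lune hf hfg ⟨hx 0, hx 1⟩
  obtain ⟨coef, hcoef⟩ := (Submodule.mem_span_range_iff_exists_fun ℝ).1
    (mem_span_of_iInf_ker_le_ker hker)
  rw [Fin.sum_univ_two] at hcoef
  refine ⟨coef 0, coef 1, ?_, by simpa using hcoef.symm⟩
  obtain ⟨p, hp₀, hpf⟩ := hf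
  obtain ⟨q, hq₀, hqg⟩ := hg
  have hgx : ∀ x, g x = coef 0 * ℓ₀ x + coef 1 * f x := fun x => by
    simp [← hcoef]
  have hgp := hgx p ▸ nonpos_of_mem_lune_of_disjoint hfg ⟨hp₀, hpf⟩
  have hfq := nonpos_of_mem_lune_of_disjoint hfg.symm ⟨hq₀, hqg⟩
  rw [hgx] at hqg
  -- `c ≥ 0` would force `a > 0` at `q`, where `f ≤ 0`, and then `g p > 0`.
  by_contra! hc
  have ha : 0 < coef 0 := by nlinarith
  nlinarith [mul_pos ha hp₀, mul_nonneg hc hpf.le]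

theorem not_pairwise_disjoint_lune_three (hf : (lune ℓ₀ f).Nonempty)
    (hg : (lune ℓ₀ g).Nonempty) (hh : (lune ℓ₀ h).Nonempty)
    (hfg : Disjoint (lune ℓ₀ f) (lune ℓ₀ g)) (hfh : Disjoint (lune ℓ₀ f) (lune ℓ₀ h))
    (hgh : Disjoint (lune ℓ₀ g) (lune ℓ₀ h)) : False := by
  obtain ⟨a₁, c₁, hc₁, hg_eq⟩ := exists_eq_smul_add_smul_of_disjoint_lune hf hg hfg
  obtain ⟨a₂, c₂, hc₂, hh_eq⟩ := exists_eq_smul_add_smul_of_disjoint_lune hf hh hfh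
  obtain ⟨a₃, c₃, hc₃, hh_eq'⟩ := exists_eq_smul_add_smul_of_disjoint_lune hg hh hgh
  have hd : c₂ - c₃ * c₁ < 0 := by nlinarith
  have hf_eq : (c₂ - c₃ * c₁) • f = (a₃ + c₃ * a₁ - a₂) • ℓ₀ := by
    rw [hh_eq, hg_eq] at hh_eq'
    linear_combination (norm := module) hh_eq'
  have hfx : ∀ x, (c₂ - c₃ * c₁) * f x = (a₃ + c₃ * a₁ - a₂) * ℓ₀ x := fun x => by
    simpa using congr($hf_eq x)
  obtain ⟨p, hp₀, hpf⟩ := hf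
  obtain ⟨q, hq₀, hqg⟩ := hg
  have hfq := nonpos_of_mem_lune_of_disjoint hfg.symm ⟨hq₀, hqg⟩
  have hμ : a₃ + c₃ * a₁ - a₂ < 0 := by nlinarith [hfx p]
  nlinarith [hfx q, mul_pos_of_neg_of_neg hμ (neg_neg_of_pos hq₀)]

end Lune

lemma hemisphere_inter_subset_lune {n : ℕ} (ℓ₀ ℓ : EuclideanSpace ℝ (Fin (n + 1)) →ₗ[ℝ] ℝ) :
    hemisphere n ℓ₀ ∩ hemisphere n ℓ ⊆ lune ℓ₀ ℓ :=
  fun _ hx => ⟨hx.1.2, hx.2.2⟩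

lemma inv_norm_smul_mem_hemisphere {n : ℕ} {ℓ : EuclideanSpace ℝ (Fin (n + 1)) →ₗ[ℝ] ℝ}
    {x : EuclideanSpace ℝ (Fin (n + 1))} (hx : 0 < ℓ x) : ‖x‖⁻¹ • x ∈ hemisphere n ℓ := by
  have hx0 : x ≠ 0 := by rintro rfl; simp at hx
  refine ⟨mem_sphere_zero_iff_norm.2 (norm_smul_inv_norm (𝕜 := ℝ) hx0), ?_⟩
  rw [map_smul, smul_eq_mul]
  exact mul_pos (inv_pos.2 (norm_pos_iff.2 hx0)) hx

lemma disjoint_lune_of_disjoint_hemisphere_inter {n : ℕ}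
    {ℓ₀ f g : EuclideanSpace ℝ (Fin (n + 1)) →ₗ[ℝ] ℝ}
    (h : Disjoint (hemisphere n ℓ₀ ∩ hemisphere n f) (hemisphere n ℓ₀ ∩ hemisphere n g)) :
    Disjoint (lune ℓ₀ f) (lune ℓ₀ g) :=
  Set.disjoint_left.2 fun _ hf hg => Set.disjoint_left.1 h
    ⟨inv_norm_smul_mem_hemisphere hf.1, inv_norm_smul_mem_hemisphere hf.2⟩
    ⟨inv_norm_smul_mem_hemisphere hg.1, inv_norm_smul_mem_hemisphere hg.2⟩

theorem hemisphere_family_card_le_two_general (n : ℕ) {I : Type*}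
    (ℓ₀ : EuclideanSpace ℝ (Fin (n + 1)) →ₗ[ℝ] ℝ)
    (ℓ : I → (EuclideanSpace ℝ (Fin (n + 1)) →ₗ[ℝ] ℝ))
    (hne : ∀ i, (hemisphere n ℓ₀ ∩ hemisphere n (ℓ i)).Nonempty)
    (hdisj : ∀ i j, i ≠ j →
      (hemisphere n ℓ₀ ∩ hemisphere n (ℓ i)) ∩ (hemisphere n ℓ₀ ∩ hemisphere n (ℓ j)) = ∅) :
    ∀ i j k : I, i = j ∨ i = k ∨ j = k := by
  intro i j k
  by_contra! hijk
  obtain ⟨hij, hik, hjk⟩ := hijk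
  have hne' i := (hne i).mono (hemisphere_inter_subset_lune ℓ₀ (ℓ i))
  have hdisj' i j (hij : i ≠ j) := disjoint_lune_of_disjoint_hemisphere_inter
    (Set.disjoint_iff_inter_eq_empty.2 (hdisj i j hij))
  exact not_pairwise_disjoint_lune_three (hne' i) (hne' j) (hne' k)
    (hdisj' i j hij) (hdisj' i k hik) (hdisj' j k hjk)

/-- If `(H_i)_{i ∈ I}` is a family of open hemispheres such that the intersections
`H₀ ∩ H_i` are nonempty and pairwise disjoint, then `I` has at most 2 elements. -/
theorem hemisphere_family_card_le_two (n : ℕ) (hn : 1 ≤ n) {I : Type*}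
    (ℓ₀ : EuclideanSpace ℝ (Fin (n + 1)) →ₗ[ℝ] ℝ) (hℓ₀ : ℓ₀ ≠ 0)
    (ℓ : I → (EuclideanSpace ℝ (Fin (n + 1)) →ₗ[ℝ] ℝ)) (hℓ : ∀ i, ℓ i ≠ 0)
    (hne : ∀ i, (hemisphere n ℓ₀ ∩ hemisphere n (ℓ i)).Nonempty)
    (hdisj : ∀ i j, i ≠ j →
      (hemisphere n ℓ₀ ∩ hemisphere n (ℓ i)) ∩ (hemisphere n ℓ₀ ∩ hemisphere n (ℓ j)) = ∅) :
    ∀ i j k : I, i = j ∨ i = k ∨ j = k :=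
  hemisphere_family_card_le_two_general n ℓ₀ ℓ hne hdisj
end

section
/- Let H₀, H₁, H₂ be open hemispheres of Sⁿ (n ≥ 2) with defining unit-norm linear functionals ℓ₀, ℓ₁, ℓ₂, such that H₁ and H₂ are not antipodal (ℓ₂ ≠ -ℓ₁). If H₀ ∩ (H₁ ∪ H₂) is not connected, then for all sufficiently small ε > 0 the set H₀^ε ∩ (H₁ ∪ H₂) is connected, where H₀^ε = {x ∈ Sⁿ : ℓ₀(x) > -ε}. -/
/-!
Pass to cones: if `ℓᵢ = ⟪vᵢ, ·⟫`, the set `H₀^ε ∩ Hᵢ` is the trace on the sphere of the cone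
`{x | 0 < ⟪vᵢ, x⟫ ∧ -ε‖x‖ < ⟪v₀, x⟫}`, and normalisation maps the cone onto it. For a unit vector
`u`, Cauchy–Schwarz puts the convex wedge `{0 < ⟪v₁, ·⟫} ∩ {0 < ⟪v₀ + ε u, ·⟫}` inside the cone.
Choose `u ⊥ v₀, v₁` (the dimension is at least 3). Along the ray `x + t u` with `⟪x, u⟫ ≥ 0` the
values of `⟪v₀, ·⟫`, `⟪v₁, ·⟫` are frozen while the norm grows, so every point of the cone reaches the
wedge of `u` or of `-u` inside the cone. These two wedges share the point `v₀ + v₁` unless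
`v₁ = -v₀`, and in that case both meet the wedge of a unit vector orthogonal to `v₀` and `u`.
Hence each cone is path connected, and the two cones meet because `v₂ ≠ -v₁`.
-/

open Module Set
open scoped RealInnerProductSpace

section Sphere

variable {F : Type*} [NormedAddCommGroup F] [NormedSpace ℝ F]

theorem IsPathConnected.inter_sphere_of_smul_mem {C : Set F} (hC : IsPathConnected C)
    (h0 : (0 : F) ∉ C) (hsmul : ∀ x ∈ C, ∀ r : ℝ, 0 < r → r • x ∈ C) :
    IsPathConnected (C ∩ Metric.sphere 0 1) := by
  have hne : ∀ x ∈ C, x ≠ 0 := fun x hx h => h0 (h ▸ hx)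
  have himage : (fun x => ‖x‖⁻¹ • x) '' C = C ∩ Metric.sphere 0 1 := by
    ext y
    constructor
    · rintro ⟨x, hx, rfl⟩
      exact ⟨hsmul x hx _ (inv_pos.2 (norm_pos_iff.2 (hne x hx))),
        mem_sphere_zero_iff_norm.2 (norm_smul_inv_norm (hne x hx))⟩
    · rintro ⟨hy, hy1⟩
      exact ⟨y, hy, by simp [mem_sphere_zero_iff_norm.1 hy1]⟩
  rw [← himage]
  refine hC.image' (ContinuousOn.smul ?_ continuousOn_id)
  exact continuous_norm.continuousOn.inv₀ fun x hx => norm_ne_zero_iff.2 (hne x hx)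

end Sphere

variable {E : Type*} [NormedAddCommGroup E] [InnerProductSpace ℝ E]

theorem exists_norm_eq_one_inner_eq_zero [FiniteDimensional ℝ E] (hdim : 3 ≤ finrank ℝ E)
    (p q : E) : ∃ u : E, ‖u‖ = 1 ∧ ⟪p, u⟫ = 0 ∧ ⟪q, u⟫ = 0 := by
  classical
  set K := Submodule.span ℝ {p, q}
  have hK : finrank ℝ K ≤ 2 := by
    have := (finrank_span_finset_le_card (R := ℝ) ({p, q} : Finset E)).trans Finset.card_le_two
    rwa [Finset.coe_pair] at this
  have hKperp : Kᗮ ≠ ⊥ := by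
    intro h
    have := K.finrank_add_finrank_orthogonal
    rw [h, finrank_bot] at this
    omega
  obtain ⟨u, hu, hu0⟩ := Submodule.exists_mem_ne_zero_of_ne_bot hKperp
  refine ⟨‖u‖⁻¹ • u, norm_smul_inv_norm hu0, ?_, ?_⟩ <;>
    rw [real_inner_smul_right, Submodule.inner_right_of_mem_orthogonal
      (Submodule.subset_span (by simp)) hu, mul_zero]

def wedge (v w : E) : Set E := {x | 0 < ⟪v, x⟫ ∧ 0 < ⟪w, x⟫}

def thickenedWedge (v₀ v₁ : E) (ε : ℝ) : Set E := {x | 0 < ⟪v₁, x⟫ ∧ -(ε * ‖x‖) < ⟪v₀, x⟫}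

theorem convex_wedge (v w : E) : Convex ℝ (wedge v w) :=
  (convex_halfSpace_gt (innerₛₗ ℝ v).isLinear 0).inter
    (convex_halfSpace_gt (innerₛₗ ℝ w).isLinear 0)

variable {v₀ v₁ v₂ u w x : E} {ε : ℝ}

theorem wedge_subset_thickenedWedge (hε : 0 ≤ ε) (hu : ‖u‖ = 1) :
    wedge v₁ (v₀ + ε • u) ⊆ thickenedWedge v₀ v₁ ε := by
  rintro x ⟨hx₁, hx₀⟩
  have h := real_inner_le_norm u x
  rw [inner_add_left, real_inner_smul_left] at hx₀
  rw [hu, one_mul] at h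
  exact ⟨hx₁, by nlinarith [mul_le_mul_of_nonneg_left h hε]⟩

theorem JoinedIn.of_mem_wedge {s : Set E} {a b : E} (ha : a ∈ wedge v w) (hb : b ∈ wedge v w)
    (hs : wedge v w ⊆ s) : JoinedIn s a b :=
  .of_segment_subset (((convex_wedge v w).segment_subset ha hb).trans hs)

theorem zero_notMem_thickenedWedge : (0 : E) ∉ thickenedWedge v₀ v₁ ε := by
  simp [thickenedWedge]

theorem smul_mem_thickenedWedge (hx : x ∈ thickenedWedge v₀ v₁ ε) {r : ℝ} (hr : 0 < r) :
    r • x ∈ thickenedWedge v₀ v₁ ε := by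
  obtain ⟨hx₁, hx₀⟩ := hx
  simp only [thickenedWedge, mem_ofPred_eq, real_inner_smul_right, norm_smul,
    Real.norm_of_nonneg hr.le]
  exact ⟨mul_pos hr hx₁, by nlinarith [mul_lt_mul_of_pos_left hx₀ hr]⟩

theorem norm_le_norm_add_smul (hxu : 0 ≤ ⟪x, u⟫) {t : ℝ} (ht : 0 ≤ t) : ‖x‖ ≤ ‖x + t • u‖ := by
  have h := norm_add_sq_real x (t • u)
  rw [real_inner_smul_right] at h
  nlinarith [norm_nonneg x, norm_nonneg (x + t • u), mul_nonneg ht hxu]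

theorem add_smul_mem_thickenedWedge (hx : x ∈ thickenedWedge v₀ v₁ ε) (hε : 0 ≤ ε)
    (hu₀ : ⟪v₀, u⟫ = 0) (hu₁ : ⟪v₁, u⟫ = 0) (hxu : 0 ≤ ⟪x, u⟫) {t : ℝ} (ht : 0 ≤ t) :
    x + t • u ∈ thickenedWedge v₀ v₁ ε := by
  obtain ⟨hx₁, hx₀⟩ := hx
  have := mul_le_mul_of_nonneg_left (norm_le_norm_add_smul hxu ht) hε
  simp only [thickenedWedge, mem_ofPred_eq, inner_add_right, real_inner_smul_right, hu₀, hu₁,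
    mul_zero, add_zero]
  exact ⟨hx₁, by linarith⟩

theorem add_norm_smul_mem_wedge (hx : x ∈ thickenedWedge v₀ v₁ ε) (hε : 0 ≤ ε) (hu : ‖u‖ = 1)
    (hu₀ : ⟪v₀, u⟫ = 0) (hu₁ : ⟪v₁, u⟫ = 0) (hxu : 0 ≤ ⟪x, u⟫) :
    x + ‖x‖ • u ∈ wedge v₁ (v₀ + ε • u) := by
  obtain ⟨hx₁, hx₀⟩ := hx
  simp only [wedge, mem_ofPred_eq, inner_add_right, inner_add_left, real_inner_smul_right,
    real_inner_smul_left, real_inner_self_eq_norm_sq, hu, hu₀, hu₁, real_inner_comm x u]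
  exact ⟨by linarith, by nlinarith [mul_nonneg hε hxu]⟩

theorem joinedIn_of_mem_wedge (hx : x ∈ thickenedWedge v₀ v₁ ε) (hε : 0 ≤ ε) (hu : ‖u‖ = 1)
    (hu₀ : ⟪v₀, u⟫ = 0) (hu₁ : ⟪v₁, u⟫ = 0) (hxu : 0 ≤ ⟪x, u⟫) {a : E}
    (ha : a ∈ wedge v₁ (v₀ + ε • u)) : JoinedIn (thickenedWedge v₀ v₁ ε) x a := by
  have hray : JoinedIn (thickenedWedge v₀ v₁ ε) x (x + ‖x‖ • u) := by
    refine .of_segment_subset ?_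
    rw [segment_eq_image']
    rintro _ ⟨θ, hθ, rfl⟩
    simp only [add_sub_cancel_left, smul_smul]
    exact add_smul_mem_thickenedWedge hx hε hu₀ hu₁ hxu (mul_nonneg hθ.1 (norm_nonneg x))
  exact hray.trans (.of_mem_wedge (add_norm_smul_mem_wedge hx hε hu hu₀ hu₁ hxu) ha
    (wedge_subset_thickenedWedge hε hu))

theorem neg_one_lt_real_inner_of_norm_eq_one (hv₀ : ‖v₀‖ = 1) (hv₁ : ‖v₁‖ = 1) (hne : v₁ ≠ -v₀) :
    -1 < ⟪v₀, v₁⟫ :=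
  (neg_one_le_real_inner_of_norm_eq_one hv₀ hv₁).lt_of_ne fun h =>
    hne (neg_eq_iff_eq_neg.1 ((inner_eq_neg_one_iff_of_norm_eq_one hv₀ hv₁).1 h.symm).symm)

theorem add_mem_wedge (hv₀ : ‖v₀‖ = 1) (hv₁ : ‖v₁‖ = 1) (hne : v₁ ≠ -v₀) (hu₀ : ⟪v₀, u⟫ = 0)
    (hu₁ : ⟪v₁, u⟫ = 0) : v₀ + v₁ ∈ wedge v₁ (v₀ + ε • u) := by
  have hc := neg_one_lt_real_inner_of_norm_eq_one hv₀ hv₁ hne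
  simp only [wedge, mem_ofPred_eq, inner_add_right, inner_add_left, real_inner_smul_left,
    real_inner_self_eq_norm_sq, hv₀, hv₁, real_inner_comm v₀ u, real_inner_comm v₁ u, hu₀, hu₁,
    real_inner_comm v₀ v₁]
  constructor <;> linarith

theorem add_add_smul_mem_wedge (hv₀ : ‖v₀‖ = 1) (hv₁ : ‖v₁‖ = 1) (hε : 0 < ε) (hu : ‖u‖ = 1)
    (hu₀ : ⟪v₀, u⟫ = 0) (hu₁ : ⟪v₁, u⟫ = 0) (hw₀ : ⟪v₀, w⟫ = 0) (hw₁ : ⟪v₁, w⟫ = 0)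
    (huw : ⟪u, w⟫ = 0) : u + w + (ε / 2) • v₁ ∈ wedge v₁ (v₀ + ε • u) := by
  have hc := neg_one_le_real_inner_of_norm_eq_one hv₀ hv₁
  simp only [wedge, mem_ofPred_eq, inner_add_right, inner_add_left, real_inner_smul_left,
    real_inner_smul_right, real_inner_self_eq_norm_sq, hv₁, hu, hu₀, hu₁, hw₀, hw₁, huw,
    real_inner_comm v₁ u]
  constructor <;> nlinarith

theorem exists_joinedIn_wedge_wedge_neg [FiniteDimensional ℝ E] (hdim : 3 ≤ finrank ℝ E)
    (hv₀ : ‖v₀‖ = 1) (hv₁ : ‖v₁‖ = 1) (hε : 0 < ε) (hu : ‖u‖ = 1) (hu₀ : ⟪v₀, u⟫ = 0)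
    (hu₁ : ⟪v₁, u⟫ = 0) : ∃ a ∈ wedge v₁ (v₀ + ε • u), ∃ b ∈ wedge v₁ (v₀ + ε • -u),
      JoinedIn (thickenedWedge v₀ v₁ ε) a b := by
  by_cases hne : v₁ = -v₀
  · obtain ⟨w, hw, hw₀, huw⟩ := exists_norm_eq_one_inner_eq_zero hdim v₀ u
    have hw₁ : ⟪v₁, w⟫ = 0 := by rw [hne, inner_neg_left, hw₀, neg_zero]
    have hnu : ‖-u‖ = 1 := by rwa [norm_neg]
    have hnu₀ : ⟪v₀, -u⟫ = 0 := by rw [inner_neg_right, hu₀, neg_zero]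
    have hnu₁ : ⟪v₁, -u⟫ = 0 := by rw [inner_neg_right, hu₁, neg_zero]
    have hwu : ⟪w, u⟫ = 0 := by rw [real_inner_comm, huw]
    have hwnu : ⟪w, -u⟫ = 0 := by rw [inner_neg_right, hwu, neg_zero]
    have hnuw : ⟪-u, w⟫ = 0 := by rw [inner_neg_left, huw, neg_zero]
    refine ⟨u + w + (ε / 2) • v₁, add_add_smul_mem_wedge hv₀ hv₁ hε hu hu₀ hu₁ hw₀ hw₁ huw,
      -u + w + (ε / 2) • v₁, add_add_smul_mem_wedge hv₀ hv₁ hε hnu hnu₀ hnu₁ hw₀ hw₁ hnuw,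
      .of_mem_wedge ?_ ?_ (wedge_subset_thickenedWedge hε.le hw)⟩
    · rw [add_comm u]
      exact add_add_smul_mem_wedge hv₀ hv₁ hε hw hw₀ hw₁ hu₀ hu₁ hwu
    · rw [add_comm (-u)]
      exact add_add_smul_mem_wedge hv₀ hv₁ hε hw hw₀ hw₁ hnu₀ hnu₁ hwnu
  · have ha := add_mem_wedge (ε := ε) hv₀ hv₁ hne hu₀ hu₁
    exact ⟨v₀ + v₁, ha, v₀ + v₁, add_mem_wedge hv₀ hv₁ hne (by simp [hu₀]) (by simp [hu₁]),
      .refl (wedge_subset_thickenedWedge hε.le hu ha)⟩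

theorem isPathConnected_thickenedWedge [FiniteDimensional ℝ E] (hdim : 3 ≤ finrank ℝ E)
    (hv₀ : ‖v₀‖ = 1) (hv₁ : ‖v₁‖ = 1) (hε : 0 < ε) :
    IsPathConnected (thickenedWedge v₀ v₁ ε) := by
  obtain ⟨u, hu, hu₀, hu₁⟩ := exists_norm_eq_one_inner_eq_zero hdim v₀ v₁
  obtain ⟨a, ha, b, hb, hab⟩ := exists_joinedIn_wedge_wedge_neg hdim hv₀ hv₁ hε hu hu₀ hu₁
  refine ⟨a, hab.mem.1, fun {x} hx => (?_ : JoinedIn _ x a).symm⟩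
  rcases le_total 0 ⟪x, u⟫ with hxu | hxu
  · exact joinedIn_of_mem_wedge hx hε.le hu hu₀ hu₁ hxu ha
  · refine (joinedIn_of_mem_wedge hx hε.le (by rwa [norm_neg]) ?_ ?_ ?_ hb).trans hab.symm <;>
      simpa [inner_neg_right]

theorem inter_thickenedWedge_nonempty [FiniteDimensional ℝ E] (hdim : 3 ≤ finrank ℝ E)
    (hv₀ : ‖v₀‖ = 1) (hv₁ : ‖v₁‖ = 1) (hv₂ : ‖v₂‖ = 1) (hne : v₂ ≠ -v₁) (hε : 0 < ε) :
    (thickenedWedge v₀ v₁ ε ∩ thickenedWedge v₀ v₂ ε).Nonempty := by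
  obtain ⟨e, he, he₁, he₂, he₀⟩ : ∃ e : E, ‖e‖ = 1 ∧ ⟪v₁, e⟫ = 0 ∧ ⟪v₂, e⟫ = 0 ∧ 0 ≤ ⟪v₀, e⟫ := by
    obtain ⟨e, he, he₁, he₂⟩ := exists_norm_eq_one_inner_eq_zero hdim v₁ v₂
    rcases le_total 0 ⟪v₀, e⟫ with h | h
    · exact ⟨e, he, he₁, he₂, h⟩
    · exact ⟨-e, by rwa [norm_neg], by simp [he₁], by simp [he₂], by simpa [inner_neg_right]⟩
  have hsub (v : E) : wedge v (v₀ + ε • e) ⊆ thickenedWedge v₀ v ε :=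
    wedge_subset_thickenedWedge hε.le he
  have hc := neg_one_lt_real_inner_of_norm_eq_one hv₁ hv₂ hne
  have hc₁ := neg_one_le_real_inner_of_norm_eq_one hv₀ hv₁
  have hc₂ := neg_one_le_real_inner_of_norm_eq_one hv₀ hv₂
  -- `⟪v₀, ε • (v₁ + v₂)⟫ ≥ -2ε` is outweighed by the `3ε` coming from `⟪ε • e, 3 • e⟫`
  set z := ε • (v₁ + v₂) + (3 : ℝ) • e
  have hz₀ : 0 < ⟪v₀ + ε • e, z⟫ := by
    simp only [z, inner_add_right, inner_add_left, real_inner_smul_left, real_inner_smul_right,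
      real_inner_self_eq_norm_sq, he, real_inner_comm v₁ e, real_inner_comm v₂ e, he₁, he₂]
    nlinarith
  have hz₁ : 0 < ⟪v₁, z⟫ := by
    simp only [z, inner_add_right, real_inner_smul_right, real_inner_self_eq_norm_sq, hv₁, he₁]
    nlinarith
  have hz₂ : 0 < ⟪v₂, z⟫ := by
    simp only [z, inner_add_right, real_inner_smul_right, real_inner_self_eq_norm_sq, hv₂, he₂,
      real_inner_comm v₁ v₂]
    nlinarith
  exact ⟨z, hsub v₁ ⟨hz₁, hz₀⟩, hsub v₂ ⟨hz₂, hz₀⟩⟩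

theorem isPathConnected_union_thickenedWedge_inter_sphere [FiniteDimensional ℝ E]
    (hdim : 3 ≤ finrank ℝ E) (hv₀ : ‖v₀‖ = 1) (hv₁ : ‖v₁‖ = 1) (hv₂ : ‖v₂‖ = 1)
    (hne : v₂ ≠ -v₁) (hε : 0 < ε) :
    IsPathConnected ((thickenedWedge v₀ v₁ ε ∪ thickenedWedge v₀ v₂ ε) ∩ Metric.sphere 0 1) := by
  refine IsPathConnected.inter_sphere_of_smul_mem ?_ ?_ ?_
  · exact (isPathConnected_thickenedWedge hdim hv₀ hv₁ hε).union
      (isPathConnected_thickenedWedge hdim hv₀ hv₂ hε)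
      (inter_thickenedWedge_nonempty hdim hv₀ hv₁ hv₂ hne hε)
  · rintro (h | h) <;> exact zero_notMem_thickenedWedge h
  · rintro x (hx | hx) r hr
    exacts [.inl (smul_mem_thickenedWedge hx hr), .inr (smul_mem_thickenedWedge hx hr)]

theorem thickened_union_connected_general (n : ℕ) (hn : 2 ≤ n)
    (ℓ₀ ℓ₁ ℓ₂ : EuclideanSpace ℝ (Fin (n + 1)) →L[ℝ] ℝ)
    (h₀ : ‖ℓ₀‖ = 1) (h₁ : ‖ℓ₁‖ = 1) (h₂ : ‖ℓ₂‖ = 1)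
    (hna : ℓ₂ ≠ -ℓ₁) :
    ∃ ε₀ > 0, ∀ ε : ℝ, 0 < ε → ε < ε₀ →
      IsConnected
        ({x | x ∈ Metric.sphere (0 : EuclideanSpace ℝ (Fin (n + 1))) 1 ∧ ℓ₀ x > -ε} ∩
          ({x | x ∈ Metric.sphere (0 : EuclideanSpace ℝ (Fin (n + 1))) 1 ∧ ℓ₁ x > 0} ∪
            {x | x ∈ Metric.sphere (0 : EuclideanSpace ℝ (Fin (n + 1))) 1 ∧ ℓ₂ x > 0})) := by
  have hdim : 3 ≤ finrank ℝ (EuclideanSpace ℝ (Fin (n + 1))) := by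
    rw [finrank_euclideanSpace_fin]
    omega
  set v := (InnerProductSpace.toDual ℝ (EuclideanSpace ℝ (Fin (n + 1)))).symm
  have hv (ℓ : _ →L[ℝ] ℝ) x : ℓ x = ⟪v ℓ, x⟫ := InnerProductSpace.toDual_symm_apply.symm
  have hne : v ℓ₂ ≠ -v ℓ₁ := by
    rw [← map_neg]
    exact v.injective.ne hna
  refine ⟨1, one_pos, fun ε hε _ => ?_⟩
  convert (isPathConnected_union_thickenedWedge_inter_sphere hdim ((v.norm_map ℓ₀).trans h₀)
    ((v.norm_map ℓ₁).trans h₁) ((v.norm_map ℓ₂).trans h₂) hne hε).isConnected using 1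
  -- the `PiLp` topology on `EuclideanSpace` agrees with the metric one only up to unfolding
  · rfl
  · ext x
    by_cases hx : ‖x‖ = 1 <;> simp [thickenedWedge, hv, hx]
    tauto

/-- Let `H₀, H₁, H₂` be open hemispheres of `Sⁿ` (`n ≥ 2`), defined by unit-norm
functionals, with `H₁` and `H₂` not antipodal. If `H₀ ∩ (H₁ ∪ H₂)` is not connected,
then for all sufficiently small `ε > 0`, `H₀^ε ∩ (H₁ ∪ H₂)` is connected, where
`H₀^ε = {ℓ₀ > -ε}`. -/
theorem thickened_union_connected (n : ℕ) (hn : 2 ≤ n)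
    (ℓ₀ ℓ₁ ℓ₂ : EuclideanSpace ℝ (Fin (n + 1)) →L[ℝ] ℝ)
    (h₀ : ‖ℓ₀‖ = 1) (h₁ : ‖ℓ₁‖ = 1) (h₂ : ‖ℓ₂‖ = 1)
    (hna : ℓ₂ ≠ -ℓ₁)
    (hdisc : ¬ IsConnected
      ({x | x ∈ Metric.sphere (0 : EuclideanSpace ℝ (Fin (n + 1))) 1 ∧ ℓ₀ x > 0} ∩
        ({x | x ∈ Metric.sphere (0 : EuclideanSpace ℝ (Fin (n + 1))) 1 ∧ ℓ₁ x > 0} ∪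
          {x | x ∈ Metric.sphere (0 : EuclideanSpace ℝ (Fin (n + 1))) 1 ∧ ℓ₂ x > 0}))) :
    ∃ ε₀ > 0, ∀ ε : ℝ, 0 < ε → ε < ε₀ →
      IsConnected
        ({x | x ∈ Metric.sphere (0 : EuclideanSpace ℝ (Fin (n + 1))) 1 ∧ ℓ₀ x > -ε} ∩
          ({x | x ∈ Metric.sphere (0 : EuclideanSpace ℝ (Fin (n + 1))) 1 ∧ ℓ₁ x > 0} ∪
            {x | x ∈ Metric.sphere (0 : EuclideanSpace ℝ (Fin (n + 1))) 1 ∧ ℓ₂ x > 0})) :=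
  thickened_union_connected_general n hn ℓ₀ ℓ₁ ℓ₂ h₀ h₁ h₂ hna
end

section
/- Let H₀, H₁, H₂ be open hemispheres of Sⁿ defined by unit-norm linear functionals ℓ₀, ℓ₁, ℓ₂, with ℓ₁ and ℓ₂ linearly independent. If H₀ ∩ H₁ and H₀ ∩ H₂ are disjoint and both nonempty, then -ℓ₀ lies in the open convex cone generated by ℓ₁ and ℓ₂, and there exists a point x ∈ Sⁿ with ℓ₀(x) = ℓ₁(x) = ℓ₂(x) = 0; moreover H₁ ∩ H₂ contains points arbitrarily close to x. -/
open InnerProductSpace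

private lemma aux_eps (A B : ℝ) (h : ∀ ε : ℝ, 0 < ε → A + ε * B ≤ 0) : A ≤ 0 := by
  by_contra hA
  push_neg at hA
  have hε : (0:ℝ) < A / (2*(|B|+1)) := by positivity
  have h2 := h _ hε
  have hB : (0:ℝ) < |B| + 1 := by positivity
  have h3 : -(A / (2*(|B|+1))) * |B| ≤ A / (2*(|B|+1)) * B := by
    rw [neg_mul]
    have := neg_abs_le B
    nlinarith
  have h4 : A / (2*(|B|+1)) * |B| ≤ A / 2 := by
    rw [div_mul_eq_mul_div, div_le_div_iff₀ (by positivity) (by norm_num)]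
    nlinarith [abs_nonneg B]
  linarith

set_option maxHeartbeats 2000000 in

/-- Let `H₀, H₁, H₂` be open hemispheres of `Sⁿ` (`n ≥ 2`) defined by unit-norm linear
functionals `ℓ₀, ℓ₁, ℓ₂`, with `ℓ₁, ℓ₂` linearly independent. If `H₀ ∩ H₁` and `H₀ ∩ H₂`
are disjoint and nonempty, then `-ℓ₀` lies in the open convex cone generated by `ℓ₁, ℓ₂`,
and there is a point `x ∈ Sⁿ` where all three functionals vanish, near which `H₁ ∩ H₂`
has points arbitrarily close. -/
theorem disjoint_halves_common_boundary_point (n : ℕ) (hn : 2 ≤ n)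
    (ℓ₀ ℓ₁ ℓ₂ : EuclideanSpace ℝ (Fin (n + 1)) →L[ℝ] ℝ)
    (h₀ : ‖ℓ₀‖ = 1) (h₁ : ‖ℓ₁‖ = 1) (h₂ : ‖ℓ₂‖ = 1)
    (hind : ∀ c : ℝ, ℓ₂ ≠ c • ℓ₁)
    (hdisj :
      ({x | x ∈ Metric.sphere (0 : EuclideanSpace ℝ (Fin (n + 1))) 1 ∧ ℓ₀ x > 0 ∧ ℓ₁ x > 0} ∩
        {x | x ∈ Metric.sphere (0 : EuclideanSpace ℝ (Fin (n + 1))) 1 ∧ ℓ₀ x > 0 ∧ ℓ₂ x > 0}) = ∅)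
    (hne₁ : ({x | x ∈ Metric.sphere (0 : EuclideanSpace ℝ (Fin (n + 1))) 1 ∧
        ℓ₀ x > 0 ∧ ℓ₁ x > 0}).Nonempty)
    (hne₂ : ({x | x ∈ Metric.sphere (0 : EuclideanSpace ℝ (Fin (n + 1))) 1 ∧
        ℓ₀ x > 0 ∧ ℓ₂ x > 0}).Nonempty) :
    (∃ a b : ℝ, 0 < a ∧ 0 < b ∧ -ℓ₀ = a • ℓ₁ + b • ℓ₂) ∧
    ∃ x ∈ Metric.sphere (0 : EuclideanSpace ℝ (Fin (n + 1))) 1,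
      ℓ₀ x = 0 ∧ ℓ₁ x = 0 ∧ ℓ₂ x = 0 ∧
      ∀ δ : ℝ, 0 < δ → ∃ y ∈ Metric.sphere (0 : EuclideanSpace ℝ (Fin (n + 1))) 1,
        ℓ₁ y > 0 ∧ ℓ₂ y > 0 ∧ dist y x < δ := by
  -- step 0 : ℓ₀ ≤ 0 on the open cone
  have key : ∀ x : EuclideanSpace ℝ (Fin (n + 1)), 0 < ℓ₁ x → 0 < ℓ₂ x → ℓ₀ x ≤ 0 := by
    intro x hx1 hx2
    have hx0 : x ≠ 0 := by rintro rfl; simp at hx1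
    have hnx : (0:ℝ) < ‖x‖ := norm_pos_iff.mpr hx0
    set u : EuclideanSpace ℝ (Fin (n + 1)) := ‖x‖⁻¹ • x with hu
    have hus : u ∈ Metric.sphere (0 : EuclideanSpace ℝ (Fin (n + 1))) 1 := by
      simp [hu, norm_smul, abs_of_pos (inv_pos.mpr hnx), inv_mul_cancel₀ (ne_of_gt hnx)]
    have h1u : 0 < ℓ₁ u := by
      rw [hu, map_smul, smul_eq_mul]; exact mul_pos (inv_pos.mpr hnx) hx1
    have h2u : 0 < ℓ₂ u := by
      rw [hu, map_smul, smul_eq_mul]; exact mul_pos (inv_pos.mpr hnx) hx2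
    have h0u : ℓ₀ u ≤ 0 := by
      by_contra h
      push_neg at h
      have : u ∈ ({x | x ∈ Metric.sphere (0 : EuclideanSpace ℝ (Fin (n + 1))) 1
            ∧ ℓ₀ x > 0 ∧ ℓ₁ x > 0} ∩
          {x | x ∈ Metric.sphere (0 : EuclideanSpace ℝ (Fin (n + 1))) 1
            ∧ ℓ₀ x > 0 ∧ ℓ₂ x > 0}) :=
        ⟨⟨hus, h, h1u⟩, ⟨hus, h, h2u⟩⟩
      rw [hdisj] at this
      exact this
    have : ℓ₀ x = ‖x‖ * ℓ₀ u := by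
      rw [hu, map_smul, smul_eq_mul, ← mul_assoc, mul_inv_cancel₀ (ne_of_gt hnx), one_mul]
    rw [this]
    exact mul_nonpos_of_nonneg_of_nonpos (le_of_lt hnx) h0u
  -- dual vectors
  obtain ⟨v₀, hp₀, hn0⟩ : ∃ v : EuclideanSpace ℝ (Fin (n + 1)),
      (∀ x, ⟪v, x⟫_ℝ = ℓ₀ x) ∧ ‖v‖ = 1 :=
    ⟨(toDual ℝ _).symm ℓ₀, fun x => toDual_symm_apply,
      by rw [LinearIsometryEquiv.norm_map]; exact h₀⟩
  obtain ⟨v₁, hp₁, hn1⟩ : ∃ v : EuclideanSpace ℝ (Fin (n + 1)),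
      (∀ x, ⟪v, x⟫_ℝ = ℓ₁ x) ∧ ‖v‖ = 1 :=
    ⟨(toDual ℝ _).symm ℓ₁, fun x => toDual_symm_apply,
      by rw [LinearIsometryEquiv.norm_map]; exact h₁⟩
  obtain ⟨v₂, hp₂, hn2⟩ : ∃ v : EuclideanSpace ℝ (Fin (n + 1)),
      (∀ x, ⟪v, x⟫_ℝ = ℓ₂ x) ∧ ‖v‖ = 1 :=
    ⟨(toDual ℝ _).symm ℓ₂, fun x => toDual_symm_apply,
      by rw [LinearIsometryEquiv.norm_map]; exact h₂⟩
  obtain ⟨c, hc⟩ : ∃ c : ℝ, c = ⟪v₁, v₂⟫_ℝ := ⟨_, rfl⟩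
  have hdep : ∀ r : ℝ, v₂ ≠ r • v₁ := by
    intro r hr
    apply hind r
    ext x
    have h5 := hp₂ x
    rw [hr, real_inner_smul_left, hp₁ x] at h5
    simpa using h5.symm
  have hclt : c < 1 := by
    have h6 := inner_lt_norm_mul_iff_real (x := v₁) (y := v₂)
    rw [hn1, hn2] at h6
    simp only [one_mul, one_smul] at h6
    rw [hc]
    exact h6.mpr (by simpa using (hdep 1).symm)
  have hcgt : -1 < c := by
    have h6 := inner_lt_norm_mul_iff_real (x := v₁) (y := -v₂)
    rw [hn1, norm_neg, hn2] at h6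
    simp only [one_mul, one_smul] at h6
    have h' : ⟪v₁, -v₂⟫_ℝ < 1 := h6.mpr (by
      intro h
      exact hdep (-1) (by rw [h]; simp))
    rw [inner_neg_right] at h'
    rw [hc]; linarith
  have hc2 : 0 < 1 - c^2 := by
    have h7 : (0:ℝ) < (1 - c) * (1 + c) := mul_pos (by linarith) (by linarith)
    nlinarith [h7]
  -- the witness direction w
  obtain ⟨w, hww⟩ : ∃ w : EuclideanSpace ℝ (Fin (n + 1)), w = v₁ + v₂ := ⟨_, rfl⟩
  have hw1 : ℓ₁ w = 1 + c := by
    rw [← hp₁ w, hww, inner_add_right, real_inner_self_eq_norm_sq, hn1, hc]; norm_num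
  have hw2 : ℓ₂ w = 1 + c := by
    rw [← hp₂ w, hww, inner_add_right, real_inner_self_eq_norm_sq, hn2,
      real_inner_comm, ← hc]; ring
  have hwpos : (0:ℝ) < 1 + c := by linarith
  -- closed-cone version
  have key' : ∀ x : EuclideanSpace ℝ (Fin (n + 1)), 0 ≤ ℓ₁ x → 0 ≤ ℓ₂ x → ℓ₀ x ≤ 0 := by
    intro x hx1 hx2
    apply aux_eps (ℓ₀ x) (ℓ₀ w)
    intro ε hε
    have e1 : ℓ₁ (x + ε • w) = ℓ₁ x + ε * ℓ₁ w := by rw [map_add, map_smul, smul_eq_mul]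
    have e2 : ℓ₂ (x + ε • w) = ℓ₂ x + ε * ℓ₂ w := by rw [map_add, map_smul, smul_eq_mul]
    have e0 : ℓ₀ (x + ε • w) = ℓ₀ x + ε * ℓ₀ w := by rw [map_add, map_smul, smul_eq_mul]
    have hew : 0 < ε * (1 + c) := mul_pos hε hwpos
    have h7 := key (x + ε • w) (by rw [e1, hw1]; linarith) (by rw [e2, hw2]; linarith)
    rw [e0] at h7
    exact h7
  -- representation ℓ₀ = α ℓ₁ + β ℓ₂
  obtain ⟨p, hp⟩ : ∃ p : ℝ, p = ℓ₀ v₁ := ⟨_, rfl⟩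
  obtain ⟨q, hq⟩ : ∃ q : ℝ, q = ℓ₀ v₂ := ⟨_, rfl⟩
  obtain ⟨α, hα⟩ : ∃ α : ℝ, α = (p - c*q)/(1-c^2) := ⟨_, rfl⟩
  obtain ⟨β, hβ⟩ : ∃ β : ℝ, β = (q - c*p)/(1-c^2) := ⟨_, rfl⟩
  obtain ⟨r, hrr⟩ : ∃ r : EuclideanSpace ℝ (Fin (n + 1)), r = v₀ - α • v₁ - β • v₂ := ⟨_, rfl⟩
  have e11 : ℓ₁ v₁ = 1 := by rw [← hp₁, real_inner_self_eq_norm_sq, hn1]; norm_num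
  have e22 : ℓ₂ v₂ = 1 := by rw [← hp₂, real_inner_self_eq_norm_sq, hn2]; norm_num
  have e12 : ℓ₁ v₂ = c := by rw [← hp₁, hc]
  have e21 : ℓ₂ v₁ = c := by rw [← hp₂, real_inner_comm, hc]
  have e10 : ℓ₁ v₀ = p := by rw [← hp₁, real_inner_comm, hp₀, hp]
  have e20 : ℓ₂ v₀ = q := by rw [← hp₂, real_inner_comm, hp₀, hq]
  have hr1 : ℓ₁ r = 0 := by
    rw [hrr, map_sub, map_sub, map_smul, map_smul, smul_eq_mul, smul_eq_mul,
      e10, e11, e12, hα, hβ]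
    field_simp
    ring
  have hr2 : ℓ₂ r = 0 := by
    rw [hrr, map_sub, map_sub, map_smul, map_smul, smul_eq_mul, smul_eq_mul,
      e20, e21, e22, hα, hβ]
    field_simp
    ring
  have hr0 : ℓ₀ r = 0 := by
    have ha := key' r (le_of_eq hr1.symm) (le_of_eq hr2.symm)
    have hb := key' (-r) (by rw [map_neg, hr1, neg_zero]) (by rw [map_neg, hr2, neg_zero])
    rw [map_neg] at hb
    linarith
  have hrz : r = 0 := by
    have : ⟪r, r⟫_ℝ = 0 := by
      have : ⟪r, r⟫_ℝ = ℓ₀ r - α * ℓ₁ r - β * ℓ₂ r := by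
        rw [show ⟪r, r⟫_ℝ = ⟪v₀ - α • v₁ - β • v₂, r⟫_ℝ from by rw [← hrr],
          inner_sub_left, inner_sub_left, real_inner_smul_left, real_inner_smul_left,
          hp₀, hp₁, hp₂]
      rw [this, hr0, hr1, hr2]; ring
    exact inner_self_eq_zero.mp this
  have hv0eq : v₀ = α • v₁ + β • v₂ := by
    have h := hrr
    rw [hrz] at h
    have h' : v₀ - (α • v₁ + β • v₂) = 0 := by rw [← sub_sub]; exact h.symm
    exact sub_eq_zero.mp h'
  have hrepr : ∀ x, ℓ₀ x = α * ℓ₁ x + β * ℓ₂ x := by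
    intro x
    rw [← hp₀, ← hp₁, ← hp₂, hv0eq, inner_add_left, real_inner_smul_left,
      real_inner_smul_left]
  -- signs
  have hαle : α ≤ 0 := by
    obtain ⟨x₁, hx₁⟩ : ∃ x₁ : EuclideanSpace ℝ (Fin (n + 1)), x₁ = v₁ - c • v₂ := ⟨_, rfl⟩
    have f1 : ℓ₁ x₁ = 1 - c^2 := by
      rw [hx₁, map_sub, map_smul, smul_eq_mul, e11, e12]; ring
    have f2 : ℓ₂ x₁ = 0 := by
      rw [hx₁, map_sub, map_smul, smul_eq_mul, e21, e22]; ring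
    have h8 := key' x₁ (by rw [f1]; linarith) (le_of_eq f2.symm)
    rw [hrepr x₁, f1, f2] at h8
    by_contra hcon
    push_neg at hcon
    have := mul_pos hcon hc2
    linarith
  have hβle : β ≤ 0 := by
    obtain ⟨x₂, hx₂⟩ : ∃ x₂ : EuclideanSpace ℝ (Fin (n + 1)), x₂ = v₂ - c • v₁ := ⟨_, rfl⟩
    have f1 : ℓ₁ x₂ = 0 := by
      rw [hx₂, map_sub, map_smul, smul_eq_mul, e11, e12]; ring
    have f2 : ℓ₂ x₂ = 1 - c^2 := by
      rw [hx₂, map_sub, map_smul, smul_eq_mul, e21, e22]; ring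
    have h8 := key' x₂ (le_of_eq f1.symm) (by rw [f2]; linarith)
    rw [hrepr x₂, f1, f2] at h8
    by_contra hcon
    push_neg at hcon
    have := mul_pos hcon hc2
    linarith
  have hαlt : α < 0 := by
    rcases lt_or_eq_of_le hαle with h | h
    · exact h
    · exfalso
      obtain ⟨z, _, hz0, hz2⟩ := hne₂
      rw [hrepr z, h] at hz0
      have := mul_nonpos_of_nonpos_of_nonneg hβle (le_of_lt hz2)
      linarith
  have hβlt : β < 0 := by
    rcases lt_or_eq_of_le hβle with h | h
    · exact h
    · exfalso
      obtain ⟨z, _, hz0, hz1⟩ := hne₁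
      rw [hrepr z, h] at hz0
      have := mul_nonpos_of_nonpos_of_nonneg hαle (le_of_lt hz1)
      linarith
  constructor
  · refine ⟨-α, -β, by linarith, by linarith, ?_⟩
    ext x
    simp only [ContinuousLinearMap.neg_apply, ContinuousLinearMap.add_apply,
      ContinuousLinearMap.coe_smul', Pi.smul_apply, smul_eq_mul]
    rw [hrepr x]; ring
  -- the common zero point
  obtain ⟨z, hzmem, hzne⟩ : ∃ z : EuclideanSpace ℝ (Fin (n + 1)),
      z ∈ (LinearMap.ker (LinearMap.prod (ℓ₁ : EuclideanSpace ℝ (Fin (n + 1)) →ₗ[ℝ] ℝ)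
        (ℓ₂ : EuclideanSpace ℝ (Fin (n + 1)) →ₗ[ℝ] ℝ))) ∧ z ≠ 0 := by
    apply Submodule.exists_mem_ne_zero_of_ne_bot
    intro hbot
    have hfr := LinearMap.finrank_range_add_finrank_ker
      (LinearMap.prod (ℓ₁ : EuclideanSpace ℝ (Fin (n + 1)) →ₗ[ℝ] ℝ)
        (ℓ₂ : EuclideanSpace ℝ (Fin (n + 1)) →ₗ[ℝ] ℝ))
    rw [hbot, finrank_bot, finrank_euclideanSpace_fin] at hfr
    have hle : Module.finrank ℝ (LinearMap.range (LinearMap.prod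
        (ℓ₁ : EuclideanSpace ℝ (Fin (n + 1)) →ₗ[ℝ] ℝ)
        (ℓ₂ : EuclideanSpace ℝ (Fin (n + 1)) →ₗ[ℝ] ℝ))) ≤ Module.finrank ℝ (ℝ × ℝ) :=
      Submodule.finrank_le _
    rw [Module.finrank_prod, Module.finrank_self] at hle
    omega
  have hz1 : ℓ₁ z = 0 := congrArg Prod.fst (LinearMap.mem_ker.mp hzmem)
  have hz2 : ℓ₂ z = 0 := congrArg Prod.snd (LinearMap.mem_ker.mp hzmem)
  have hnz : (0:ℝ) < ‖z‖ := norm_pos_iff.mpr hzne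
  obtain ⟨x, hx⟩ : ∃ x : EuclideanSpace ℝ (Fin (n + 1)), x = ‖z‖⁻¹ • z := ⟨_, rfl⟩
  have hxs : x ∈ Metric.sphere (0 : EuclideanSpace ℝ (Fin (n + 1))) 1 := by
    simp [hx, norm_smul, abs_of_pos (inv_pos.mpr hnz), inv_mul_cancel₀ (ne_of_gt hnz)]
  have hx1 : ℓ₁ x = 0 := by rw [hx, map_smul, smul_eq_mul, hz1, mul_zero]
  have hx2 : ℓ₂ x = 0 := by rw [hx, map_smul, smul_eq_mul, hz2, mul_zero]
  have hx0 : ℓ₀ x = 0 := by rw [hrepr x, hx1, hx2]; ring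
  refine ⟨x, hxs, hx0, hx1, hx2, ?_⟩
  -- approximation
  intro δ hδ
  obtain ⟨t, ht⟩ : ∃ t : ℝ, t = min δ 1 / (2 * ‖w‖ + 2) := ⟨_, rfl⟩
  have hwn : (0:ℝ) ≤ ‖w‖ := norm_nonneg w
  have htpos : 0 < t := by
    rw [ht]
    have : (0:ℝ) < min δ 1 := lt_min hδ one_pos
    positivity
  have hm : (0:ℝ) < min δ 1 := lt_min hδ one_pos
  have htw : 2 * (t * ‖w‖) < min δ 1 := by
    have he : 2 * (t * ‖w‖) = min δ 1 * (2 * ‖w‖) / (2 * ‖w‖ + 2) := by rw [ht]; ring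
    rw [he, div_lt_iff₀ (by positivity)]
    have h10 : min δ 1 * (2 * ‖w‖ + 2) = min δ 1 * (2 * ‖w‖) + 2 * min δ 1 := by ring
    linarith
  obtain ⟨z', hz'⟩ : ∃ z' : EuclideanSpace ℝ (Fin (n + 1)), z' = x + t • w := ⟨_, rfl⟩
  have hz'x : ‖z' - x‖ = t * ‖w‖ := by
    rw [hz']
    simp [norm_smul, abs_of_pos htpos]
  have hxn : ‖x‖ = 1 := by simpa using hxs
  have hz'pos : (0:ℝ) < ‖z'‖ := by
    have h9 : ‖x‖ ≤ ‖z'‖ + ‖z' - x‖ := by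
      calc ‖x‖ = ‖z' - (z' - x)‖ := by congr 1; abel
      _ ≤ ‖z'‖ + ‖z' - x‖ := norm_sub_le _ _
    rw [hxn, hz'x] at h9
    have hmin : min δ 1 ≤ 1 := min_le_right δ 1
    linarith
  obtain ⟨y, hy⟩ : ∃ y : EuclideanSpace ℝ (Fin (n + 1)), y = ‖z'‖⁻¹ • z' := ⟨_, rfl⟩
  have hys : y ∈ Metric.sphere (0 : EuclideanSpace ℝ (Fin (n + 1))) 1 := by
    simp [hy, norm_smul, abs_of_pos (inv_pos.mpr hz'pos), inv_mul_cancel₀ (ne_of_gt hz'pos)]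
  have hl1z' : ℓ₁ z' = t * (1 + c) := by
    rw [hz', map_add, map_smul, smul_eq_mul, hx1, hw1]; ring
  have hl2z' : ℓ₂ z' = t * (1 + c) := by
    rw [hz', map_add, map_smul, smul_eq_mul, hx2, hw2]; ring
  have hy1 : ℓ₁ y > 0 := by
    rw [hy, map_smul, smul_eq_mul, hl1z']
    positivity
  have hy2 : ℓ₂ y > 0 := by
    rw [hy, map_smul, smul_eq_mul, hl2z']
    positivity
  refine ⟨y, hys, hy1, hy2, ?_⟩
  have hyz' : ‖y - z'‖ = |1 - ‖z'‖| := by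
    have hsub : y - z' = (‖z'‖⁻¹ - 1) • z' := by rw [hy, sub_smul, one_smul]
    calc ‖y - z'‖ = |‖z'‖⁻¹ - 1| * ‖z'‖ := by rw [hsub, norm_smul, Real.norm_eq_abs]
    _ = |‖z'‖⁻¹ - 1| * |‖z'‖| := by rw [abs_of_pos hz'pos]
    _ = |(‖z'‖⁻¹ - 1) * ‖z'‖| := (abs_mul _ _).symm
    _ = |1 - ‖z'‖| := by rw [sub_mul, inv_mul_cancel₀ (ne_of_gt hz'pos), one_mul]
  have hbd : |1 - ‖z'‖| ≤ t * ‖w‖ := by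
    rw [← hxn, ← hz'x]
    calc |‖x‖ - ‖z'‖| ≤ ‖x - z'‖ := abs_norm_sub_norm_le x z'
    _ = ‖z' - x‖ := by rw [norm_sub_rev]
  have hdist : dist y x ≤ ‖y - z'‖ + ‖z' - x‖ := by
    rw [dist_eq_norm]
    calc ‖y - x‖ = ‖(y - z') + (z' - x)‖ := by congr 1; abel
    _ ≤ ‖y - z'‖ + ‖z' - x‖ := norm_add_le _ _
  have hminδ : min δ 1 ≤ δ := min_le_left δ 1
  rw [hyz', hz'x] at hdist
  linarith
end

section
/- In ℝ^{p,q} with p,q ≥ 2, the open cone U_S = {v : q(v) > 0} is locally connected relative to ℝⁿ: every point x in the closure of U_S (including points on the isotropic cone {q = 0}) has a fundamental system of neighborhoods V such that V ∩ U_S is connected. The same holds for U_T = {q < 0}. -/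
/-!
Splitting `ℝ^{p,q} = ℝ^p × ℝ^q`, the cone `U_S` becomes `U = {(a, b) | ‖a‖ < ‖b‖}` (Euclidean
norms) and `U_T` the same set with the factors swapped, so it suffices to treat `U` in a product
`E × F` of normed spaces whose unit sphere in `F` is connected.

Near a point `(a₀, b₀)` of the closure of `U`, take `V = ball a₀ r × N`, where `N` consists of
the `b` with `|‖b‖ - ‖b₀‖| < r` lying in the open cone `Ioi 0 • ball b₀ r`. In polar coordinates
`b = t • w`, the set `V ∩ U` is the image of the convex set
`{(a, t) | a ∈ ball a₀ r, |t - ‖b₀‖| < r, ‖a‖ < t}` times the trace of the cone on the unit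
sphere. If `r ≤ ‖b₀‖` that trace is the radial projection of `ball b₀ r`, hence connected; if
`b₀ = 0` it is the whole sphere, connected since `q ≥ 2` (resp. `p ≥ 2`).
-/

open Topology

open Metric Set Pointwise

def IsRelLocallyConnected {X : Type*} [TopologicalSpace X] (U : Set X) : Prop :=
  ∀ x ∈ closure U, ∀ W ∈ 𝓝 x, ∃ V ∈ 𝓝 x, V ⊆ W ∧ IsConnected (V ∩ U)

lemma IsRelLocallyConnected.preimage_homeomorph {X Y : Type*} [TopologicalSpace X]
    [TopologicalSpace Y] {U : Set Y} (h : IsRelLocallyConnected U) (e : X ≃ₜ Y) :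
    IsRelLocallyConnected (e ⁻¹' U) := by
  intro x hx W hW
  rw [← e.preimage_closure] at hx
  obtain ⟨V, hV, hVW, hVU⟩ := h (e x) hx (e '' W) (e.isOpenMap.image_mem_nhds hW)
  refine ⟨e ⁻¹' V, e.continuous.continuousAt.preimage_mem_nhds hV, ?_, ?_⟩
  · exact (preimage_mono hVW).trans (e.preimage_image W).subset
  · rw [← preimage_inter]
    exact e.isConnected_preimage.2 hVU

section NormLT

variable {E F : Type*} [NormedAddCommGroup E] [NormedAddCommGroup F] [NormedSpace ℝ F]

lemma norm_sub_lt_of_mem_Ioi_smul_ball {b₀ b : F} {r : ℝ} (hb : b ∈ Ioi (0 : ℝ) • ball b₀ r)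
    (hnorm : |‖b‖ - ‖b₀‖| < r) : ‖b - b₀‖ < 3 * r := by
  obtain ⟨t, ht, b', hb', rfl⟩ := hb
  rw [mem_ball_iff_norm] at hb'
  have hscale : ‖t • b' - b'‖ = |‖t • b'‖ - ‖b'‖| := by
    rw [show t • b' - b' = (t - 1) • b' by rw [sub_smul, one_smul], norm_smul, norm_smul,
      Real.norm_eq_abs, Real.norm_of_nonneg ht.le, ← sub_one_mul, abs_mul, abs_norm]
  have h₁ : |‖b'‖ - ‖b₀‖| < r := (abs_norm_sub_norm_le b' b₀).trans_lt hb'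
  calc ‖t • b' - b₀‖ ≤ ‖t • b' - b'‖ + ‖b' - b₀‖ := norm_sub_le_norm_sub_add_norm_sub _ _ _
    _ < 3 * r := by
      rw [hscale]
      linarith [abs_sub_le ‖t • b'‖ ‖b₀‖ ‖b'‖, abs_sub_comm ‖b'‖ ‖b₀‖]

lemma sphere_inter_Ioi_smul_eq_image {O : Set F} (hO : (0 : F) ∉ O) :
    sphere (0 : F) 1 ∩ Ioi (0 : ℝ) • O = (fun b => ‖b‖⁻¹ • b) '' O := by
  ext w
  constructor
  · rintro ⟨hw, t, ht, b, hb, rfl⟩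
    refine ⟨b, hb, ?_⟩
    rw [mem_sphere_zero_iff_norm, norm_smul, Real.norm_of_nonneg ht.le] at hw
    change ‖b‖⁻¹ • b = t • b
    rw [eq_inv_of_mul_eq_one_left hw]
  · rintro ⟨b, hb, rfl⟩
    have hb0 : 0 < ‖b‖ := norm_pos_iff.2 fun h => hO (h ▸ hb)
    refine ⟨?_, ‖b‖⁻¹, inv_pos.2 hb0, b, hb, rfl⟩
    rw [mem_sphere_zero_iff_norm, norm_smul, norm_inv, norm_norm, inv_mul_cancel₀ hb0.ne']

lemma isConnected_sphere_inter_Ioi_smul_ball (hF : IsConnected (sphere (0 : F) 1))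
    {b₀ : F} {r : ℝ} (hr : 0 < r) (hb₀ : b₀ = 0 ∨ r ≤ ‖b₀‖) :
    IsConnected (sphere (0 : F) 1 ∩ Ioi (0 : ℝ) • ball b₀ r) := by
  rcases hb₀ with rfl | hrb₀
  · convert hF using 1
    refine inter_eq_left.2 fun w hw => ⟨2 / r, div_pos two_pos hr, (r / 2) • w, ?_, ?_⟩
    · rw [mem_sphere_zero_iff_norm] at hw
      rw [mem_ball_zero_iff, norm_smul, hw, Real.norm_of_nonneg (by positivity)]
      linarith
    · change (2 / r) • (r / 2) • w = w
      rw [smul_smul, div_mul_div_cancel₀ hr.ne', div_self two_ne_zero, one_smul]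
  · have h0 : (0 : F) ∉ ball b₀ r := by
      rw [mem_ball, dist_comm, dist_zero_right, not_lt]
      exact hrb₀
    rw [sphere_inter_Ioi_smul_eq_image h0]
    refine (isConnected_ball hr).image _ (ContinuousOn.smul ?_ continuousOn_id)
    exact continuous_norm.continuousOn.inv₀ fun b hb => norm_ne_zero_iff.2 fun h => h0 (h ▸ hb)

lemma prod_inter_normLT_eq_image {A : Set E} {I : Set ℝ} {C : Set F}
    (hC : ∀ t : ℝ, 0 < t → ∀ b ∈ C, t • b ∈ C) :
    (A ×ˢ (C ∩ norm ⁻¹' I)) ∩ {z : E × F | ‖z.1‖ < ‖z.2‖} =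
      (fun y : (E × ℝ) × F => (y.1.1, y.1.2 • y.2)) ''
        (((A ×ˢ I) ∩ {y : E × ℝ | ‖y.1‖ < y.2}) ×ˢ (sphere (0 : F) 1 ∩ C)) := by
  ext ⟨a, b⟩
  constructor
  · rintro ⟨⟨ha, hbC, hbI⟩, hab⟩
    have hb : 0 < ‖b‖ := (norm_nonneg a).trans_lt hab
    refine ⟨((a, ‖b‖), ‖b‖⁻¹ • b), ⟨⟨⟨ha, hbI⟩, hab⟩, ?_, hC _ (inv_pos.2 hb) b hbC⟩, ?_⟩
    · rw [mem_sphere_zero_iff_norm, norm_smul, norm_inv, norm_norm, inv_mul_cancel₀ hb.ne']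
    · simp only [smul_smul, mul_inv_cancel₀ hb.ne', one_smul]
  · rintro ⟨⟨⟨a, t⟩, w⟩, ⟨⟨⟨ha, ht⟩, hat⟩, hw, hwC⟩, hy⟩
    simp only [Prod.mk.injEq] at hy
    obtain ⟨rfl, rfl⟩ := hy
    rw [mem_sphere_zero_iff_norm] at hw
    have ht0 : 0 < t := (norm_nonneg a).trans_lt hat
    have hnorm : ‖t • w‖ = t := by rw [norm_smul, hw, mul_one, Real.norm_of_nonneg ht0.le]
    exact ⟨⟨ha, hC t ht0 w hwC, by simpa [hnorm] using ht⟩, by simpa [hnorm] using hat⟩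

lemma isConnected_prod_inter_normLT [NormedSpace ℝ E] {A : Set E} {I : Set ℝ} (hA : Convex ℝ A)
    (hI : Convex ℝ I) (hne : ((A ×ˢ I) ∩ {y : E × ℝ | ‖y.1‖ < y.2}).Nonempty) :
    IsConnected ((A ×ˢ I) ∩ {y : E × ℝ | ‖y.1‖ < y.2}) := by
  refine ⟨hne, ((hA.prod hI).inter ?_).isPreconnected⟩
  simpa using (convexOn_norm (convex_univ (E := E))).convex_strict_epigraph

theorem exists_nhds_subset_ball_isConnected_inter_normLT [NormedSpace ℝ E]
    (hF : IsConnected (sphere (0 : F) 1)) {x : E × F} (hx : ‖x.1‖ ≤ ‖x.2‖) {ε : ℝ}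
    (hε : 0 < ε) :
    ∃ V ∈ 𝓝 x, V ⊆ ball x ε ∧ IsConnected (V ∩ {z : E × F | ‖z.1‖ < ‖z.2‖}) := by
  obtain ⟨r, hr, hrε, hx₂⟩ : ∃ r, 0 < r ∧ 3 * r ≤ ε ∧ (x.2 = 0 ∨ r ≤ ‖x.2‖) := by
    rcases eq_or_ne x.2 0 with h | h
    · exact ⟨ε / 3, by positivity, by linarith, Or.inl h⟩
    · refine ⟨min (ε / 3) ‖x.2‖, lt_min (by positivity) (norm_pos_iff.2 h), ?_,
        Or.inr (min_le_right _ _)⟩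
      linarith [min_le_left (ε / 3) ‖x.2‖]
  set C : Set F := Ioi (0 : ℝ) • ball x.2 r
  set I : Set ℝ := Ioo (‖x.2‖ - r) (‖x.2‖ + r)
  have hC : ∀ t : ℝ, 0 < t → ∀ b ∈ C, t • b ∈ C := by
    rintro t ht _ ⟨s, hs, b, hb, rfl⟩
    exact ⟨t * s, mul_pos ht hs, b, hb, mul_smul t s b⟩
  have hCopen : IsOpen C := by
    simp only [C]
    rw [← iUnion_smul_set]
    exact isOpen_biUnion fun t ht => isOpen_ball.smul₀ (ne_of_gt ht)
  refine ⟨ball x.1 r ×ˢ (C ∩ norm ⁻¹' I), ?_, ?_, ?_⟩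
  · refine (isOpen_ball.prod (hCopen.inter (isOpen_Ioo.preimage continuous_norm))).mem_nhds
      ⟨mem_ball_self hr, ⟨1, mem_Ioi.2 one_pos, x.2, mem_ball_self hr, one_smul ℝ x.2⟩, ?_⟩
    simp only [mem_preimage, mem_Ioo]
    constructor <;> linarith
  · rw [← ball_prod_same]
    refine prod_mono (ball_subset_ball (by linarith)) fun b ⟨hbC, hbI⟩ => ?_
    rw [mem_ball_iff_norm]
    refine (norm_sub_lt_of_mem_Ioi_smul_ball hbC ?_).trans_le hrε
    exact abs_sub_lt_iff.2 ⟨by linarith [hbI.2], by linarith [hbI.1]⟩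
  · rw [prod_inter_normLT_eq_image hC]
    refine ((isConnected_prod_inter_normLT (convex_ball x.1 r) (convex_Ioo _ _) ?_).prod
      (isConnected_sphere_inter_Ioi_smul_ball hF hr hx₂)).image _ (by fun_prop)
    refine ⟨(x.1, ‖x.2‖ + r / 2), ⟨mem_ball_self hr, ?_, ?_⟩, ?_⟩ <;>
      simp only [mem_ofPred_eq] <;> linarith

lemma isRelLocallyConnected_normLT [NormedSpace ℝ E] (hF : IsConnected (sphere (0 : F) 1)) :
    IsRelLocallyConnected {z : E × F | ‖z.1‖ < ‖z.2‖} := by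
  intro x hx W hW
  obtain ⟨ε, hε, hεW⟩ := Metric.mem_nhds_iff.1 hW
  have hx' : ‖x.1‖ ≤ ‖x.2‖ := closure_lt_subset_le (by fun_prop) (by fun_prop) hx
  obtain ⟨V, hV, hVε, hVU⟩ := exists_nhds_subset_ball_isConnected_inter_normLT hF hx' hε
  exact ⟨V, hV, hVε.trans hεW, hVU⟩

end NormLT

lemma isConnected_sphere_euclideanSpace {k : ℕ} (hk : 2 ≤ k) :
    IsConnected (sphere (0 : EuclideanSpace ℝ (Fin k)) 1) := by
  refine isConnected_sphere ?_ 0 zero_le_one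
  rw [← Module.finrank_eq_rank, finrank_euclideanSpace_fin]
  exact_mod_cast hk

noncomputable def splitEuclidean (p q : ℕ) :
    (Fin (p + q) → ℝ) ≃ₜ EuclideanSpace ℝ (Fin p) × EuclideanSpace ℝ (Fin q) :=
  (Fin.appendHomeomorph p q).symm.trans
    ((EuclideanSpace.equiv (Fin p) ℝ).symm.toHomeomorph.prodCongr
      (EuclideanSpace.equiv (Fin q) ℝ).symm.toHomeomorph)

lemma splitEuclidean_apply (p q : ℕ) (v : Fin (p + q) → ℝ) :
    splitEuclidean p q v =
      (WithLp.toLp 2 fun i => v (Fin.castAdd q i), WithLp.toLp 2 fun j => v (Fin.natAdd p j)) :=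
  rfl

lemma formB_self_eq (p q : ℕ) (v : Fin (p + q) → ℝ) :
    formB p q v v = ‖(splitEuclidean p q v).2‖ ^ 2 - ‖(splitEuclidean p q v).1‖ ^ 2 := by
  rw [splitEuclidean_apply, EuclideanSpace.real_norm_sq_eq, EuclideanSpace.real_norm_sq_eq, formB,
    Fin.sum_univ_add]
  simp only [Fin.val_castAdd, Fin.is_lt, ↓reduceIte, Fin.val_natAdd, add_lt_iff_neg_left,
    not_lt_zero, Finset.sum_neg_distrib, neg_add_eq_sub, sq]

lemma setOf_formB_pos (p q : ℕ) :
    {v : Fin (p + q) → ℝ | formB p q v v > 0} =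
      splitEuclidean p q ⁻¹' {z | ‖z.1‖ < ‖z.2‖} := by
  ext v
  simp only [mem_ofPred_eq, mem_preimage, formB_self_eq, gt_iff_lt, sub_pos]
  exact sq_lt_sq₀ (norm_nonneg _) (norm_nonneg _)

lemma setOf_formB_neg (p q : ℕ) :
    {v : Fin (p + q) → ℝ | formB p q v v < 0} =
      (splitEuclidean p q).trans (Homeomorph.prodComm _ _) ⁻¹' {z | ‖z.1‖ < ‖z.2‖} := by
  ext v
  simp only [mem_ofPred_eq, mem_preimage, formB_self_eq, sub_neg, Homeomorph.trans_apply,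
    Homeomorph.coe_prodComm, Prod.fst_swap, Prod.snd_swap]
  exact sq_lt_sq₀ (norm_nonneg _) (norm_nonneg _)

/-- For `p, q ≥ 2`, the open cones `U_S = {q > 0}` and `U_T = {q < 0}` are locally
connected relative to `ℝⁿ`: every point of their closures has a fundamental system of
neighborhoods `V` with connected trace on the cone. -/
theorem cones_locally_connected_rel (p q : ℕ) (hp : 2 ≤ p) (hq : 2 ≤ q) :
    (∀ x ∈ closure {v : Fin (p + q) → ℝ | formB p q v v > 0},
      ∀ W ∈ 𝓝 x, ∃ V ∈ 𝓝 x, V ⊆ W ∧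
        IsConnected (V ∩ {v : Fin (p + q) → ℝ | formB p q v v > 0})) ∧
    (∀ x ∈ closure {v : Fin (p + q) → ℝ | formB p q v v < 0},
      ∀ W ∈ 𝓝 x, ∃ V ∈ 𝓝 x, V ⊆ W ∧
        IsConnected (V ∩ {v : Fin (p + q) → ℝ | formB p q v v < 0})) := by
  change IsRelLocallyConnected _ ∧ IsRelLocallyConnected _
  rw [setOf_formB_pos, setOf_formB_neg]
  exact
    ⟨(isRelLocallyConnected_normLT (isConnected_sphere_euclideanSpace hq)).preimage_homeomorph _,
      (isRelLocallyConnected_normLT (isConnected_sphere_euclideanSpace hp)).preimage_homeomorph _⟩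
end

section
/- Let M, N be topological manifolds with N Hausdorff, f : M → N a local homeomorphism, and V ⊆ M an open set with compact closure such that f is injective on the closure of V. Then there exists an open neighborhood V' of the closure of V on which f is still injective. -/
/-- Let `f : M → N` be a local homeomorphism between (Hausdorff, locally compact)
topological manifolds, and `V ⊆ M` open with compact closure such that `f` is injective
on the closure of `V`. Then there is an open neighborhood `V'` of the closure of `V` on
which `f` is still injective. -/
theorem exists_injective_thickening {M N : Type*}
    [TopologicalSpace M] [T2Space M] [LocallyCompactSpace M]
    [TopologicalSpace N] [T2Space N]
    (f : M → N) (hf : IsLocalHomeomorph f) (V : Set M) (hV : IsOpen V)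
    (hcpt : IsCompact (closure V)) (hinj : Set.InjOn f (closure V)) :
    ∃ V' : Set M, IsOpen V' ∧ closure V ⊆ V' ∧ Set.InjOn f V' := by
  set K := closure V
  -- The "good" set of pairs where injectivity is not violated
  set G : Set (M × M) := {p | f p.1 = f p.2 → p.1 = p.2} with hG
  have hGopen : IsOpen G := by
    rw [isOpen_iff_mem_nhds]
    rintro ⟨x, y⟩ hxy
    by_cases hfeq : f x = f y
    · have hxy' : x = y := hxy hfeq
      subst hxy'
      obtain ⟨e, hxe, hfe⟩ := hf x
      have : e.source ×ˢ e.source ⊆ G := by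
        rintro ⟨a, b⟩ ⟨ha, hb⟩ h
        exact e.injOn ha hb (by rw [← hfe]; exact h)
      exact Filter.mem_of_superset
        (prod_mem_nhds (e.open_source.mem_nhds hxe) (e.open_source.mem_nhds hxe)) this
    · -- the set where f p.1 ≠ f p.2 is open since N is T2
      have hopen : IsOpen {p : M × M | f p.1 ≠ f p.2} := by
        have : {p : M × M | f p.1 ≠ f p.2} =
            (fun p : M × M => (f p.1, f p.2)) ⁻¹' (Set.diagonal N)ᶜ := by
          ext p; simp [Set.diagonal]
        rw [this]
        exact (isClosed_diagonal.isOpen_compl).preimage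
          ((hf.continuous.comp continuous_fst).prodMk (hf.continuous.comp continuous_snd))
      exact Filter.mem_of_superset (hopen.mem_nhds hfeq) (fun p hp h => absurd h hp)
  have hKK : K ×ˢ K ⊆ G := fun p hp h => hinj hp.1 hp.2 h
  have hmem : G ∈ nhdsSet K ×ˢ nhdsSet K := by
    rw [← hcpt.nhdsSet_prod_eq hcpt]
    exact hGopen.mem_nhdsSet.mpr hKK
  obtain ⟨s, hs, t, ht, hst⟩ := Filter.mem_prod_iff.mp hmem
  refine ⟨interior (s ∩ t), isOpen_interior, ?_, ?_⟩
  · rw [subset_interior_iff_mem_nhdsSet]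
    exact Filter.inter_mem hs ht
  · intro x hx y hy h
    exact hst (Set.mk_mem_prod (interior_subset hx).1 (interior_subset hy).2) h
end

section
/- Let W₁, …, Wated_l ⊂ ℝ^{p,q} (p,q ≥ 2, l ≥ 2) be pairwise distinct nonempty open sets, each of intersection type (a translate of U_S, a translate of U_T, or a degenerate half-space H_{v,α} with v isotropic nonzero). Then the union W₁ ∪ ⋯ ∪ W_l is disconnected if and only if either (1) there exist an isotropic vector v ≠ 0, reals α₁ > ⋯ > α_{k₀} ≥ α_{k₀+1} > ⋯ > α_l and 1 ≤ k₀ ≤ l-1 such that, up to permutation, W_i = H_{v,α_i} for i ≤ k₀ and W_i = H_{-v,-α_i} for i > k₀, or (2) l = 2 and, up to permutation, W₁ = v + U_S and W₂ = v + U_T for some v ∈ ℝⁿ. -/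
/-!
Every set of intersection type is preconnected: the translates of `U_S` and `U_T` are path
connected because `p, q ≥ 2`, and the half-spaces are convex. So if the union is disconnected, the
family splits into two nonempty blocks such that every set of one block is disjoint from every set
of the other. Disjointness is very restrictive. A translate of `U_S` meets every other set except
the translate of `U_T` with the same vertex (moving along an isotropic line), the half-spaces meet
all translates of `U_S` and `U_T`, and two half-spaces are disjoint only if their normals are
negatively proportional. Hence either the blocks are `{v + U_S}` and `{v + U_T}`, or all sets are
half-spaces `H_{v,α}` on one side and `H_{-v,-β}` on the other side with every `β ≤` every `α`;
sorting the thresholds gives the normal form. Conversely, both configurations are separated, by a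
level set of `b(v, ·)` and by the light cone at `v` respectively.
-/

open Filter Finset

section Algebra

variable {p q : ℕ}

theorem formB_comm (v w : Fin (p + q) → ℝ) : formB p q v w = formB p q w v := by
  unfold formB; congr 1; ext i; split <;> ring

theorem formB_add_left (u v w : Fin (p + q) → ℝ) :
    formB p q (u + v) w = formB p q u w + formB p q v w := by
  unfold formB; rw [← sum_add_distrib]; congr 1; ext i
  simp only [Pi.add_apply]; split <;> ring

theorem formB_smul_left (c : ℝ) (v w : Fin (p + q) → ℝ) :
    formB p q (c • v) w = c * formB p q v w := by
  unfold formB; rw [mul_sum]; congr 1; ext i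
  simp only [Pi.smul_apply, smul_eq_mul]; split <;> ring

variable (p q) in
noncomputable def formBₗ : (Fin (p + q) → ℝ) →ₗ[ℝ] (Fin (p + q) → ℝ) →ₗ[ℝ] ℝ :=
  LinearMap.mk₂ ℝ (formB p q) formB_add_left formB_smul_left
    (fun u v w => by rw [formB_comm, formB_add_left, formB_comm v, formB_comm w])
    (fun c v w => by rw [formB_comm, formB_smul_left, formB_comm, smul_eq_mul])

theorem formBₗ_apply (v w : Fin (p + q) → ℝ) : formBₗ p q v w = formB p q v w := rfl

theorem formB_add_right (u v w : Fin (p + q) → ℝ) :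
    formB p q u (v + w) = formB p q u v + formB p q u w :=
  (formBₗ p q u).map_add v w

theorem formB_smul_right (c : ℝ) (v w : Fin (p + q) → ℝ) :
    formB p q v (c • w) = c * formB p q v w :=
  (formBₗ p q v).map_smul c w

theorem formB_neg_left (v w : Fin (p + q) → ℝ) : formB p q (-v) w = -formB p q v w :=
  (formBₗ p q).map_neg₂ v w

theorem formB_append (a c : Fin p → ℝ) (b d : Fin q → ℝ) :
    formB p q (Fin.append a b) (Fin.append c d) = b ⬝ᵥ d - a ⬝ᵥ c := by
  simp [formB, Fin.sum_univ_add, dotProduct, sum_neg_distrib, sub_eq_neg_add]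

theorem formB_single (v : Fin (p + q) → ℝ) (j : Fin (p + q)) :
    formB p q v (Pi.single j 1) = if (j : ℕ) < p then -v j else v j := by
  rw [formB, sum_eq_single j (fun i _ hij => by simp [Pi.single_eq_of_ne hij]) (by simp)]
  simp

theorem formBₗ_injective : Function.Injective (formBₗ p q) := by
  intro v w h
  ext j
  have := LinearMap.congr_fun h (Pi.single j 1)
  simp only [formBₗ_apply, formB_single] at this
  split_ifs at this <;> linarith

theorem formB_surjective {z : Fin (p + q) → ℝ} (hz : z ≠ 0) :
    Function.Surjective (formB p q z) :=
  LinearMap.surjective_of_ne_zero fun h => hz (formBₗ_injective (h.trans (map_zero _).symm))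

theorem formB_add_smul_self (w e : Fin (p + q) → ℝ) (t : ℝ) :
    formB p q (w + t • e) (w + t • e) =
      formB p q e e * t ^ 2 + 2 * formB p q w e * t + formB p q w w := by
  simp only [formB_add_left, formB_add_right, formB_smul_left, formB_smul_right,
    formB_comm e w]
  ring

end Algebra

section Existence

variable {p q : ℕ}

theorem exists_eq_append (x : Fin (p + q) → ℝ) : ∃ a b, x = Fin.append a b :=
  ⟨_, _, Fin.append_castAdd_natAdd.symm⟩

theorem exists_formB_eq_zero_and_pos (hq : 2 ≤ q) (z : Fin (p + q) → ℝ) :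
    ∃ e, formB p q z e = 0 ∧ 0 < formB p q e e := by
  obtain ⟨a, b, rfl⟩ := exists_eq_append z
  have : Nontrivial (Fin q) := Fin.nontrivial_iff_two_le.2 hq
  obtain ⟨c, hc, hcb⟩ := exists_ne_zero_dotProduct_eq_zero b
  refine ⟨Fin.append 0 c, by simp [formB_append, dotProduct_comm b, hcb], ?_⟩
  simpa [formB_append] using Matrix.dotProduct_self_star_pos_iff.2 hc

theorem exists_formB_eq_zero_and_neg (hp : 2 ≤ p) (z : Fin (p + q) → ℝ) :
    ∃ e, formB p q z e = 0 ∧ formB p q e e < 0 := by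
  obtain ⟨a, b, rfl⟩ := exists_eq_append z
  have : Nontrivial (Fin p) := Fin.nontrivial_iff_two_le.2 hp
  obtain ⟨c, hc, hca⟩ := exists_ne_zero_dotProduct_eq_zero a
  refine ⟨Fin.append c 0, by simp [formB_append, dotProduct_comm a, hca], ?_⟩
  simpa [formB_append] using Matrix.dotProduct_self_star_pos_iff.2 hc

theorem exists_isotropic_formB_ne_zero (hp : 1 ≤ p) (hq : 1 ≤ q) {d : Fin (p + q) → ℝ}
    (hd : d ≠ 0) : ∃ z, formB p q z z = 0 ∧ formB p q z d ≠ 0 := by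
  obtain ⟨a, b, rfl⟩ := exists_eq_append d
  by_contra! h
  -- `append (single i 1) (single j (±1))` is isotropic and pairs with `d` to `±b j - a i`
  have key : ∀ (i : Fin p) (j : Fin q), a i = 0 ∧ b j = 0 := by
    intro i j
    have h₁ := h (Fin.append (Pi.single i 1) (Pi.single j 1)) (by simp [formB_append])
    have h₂ := h (Fin.append (Pi.single i 1) (Pi.single j (-1))) (by simp [formB_append])
    simp only [formB_append, single_dotProduct] at h₁ h₂
    constructor <;> linarith
  apply hd
  have ha : a = 0 := funext fun i => (key i ⟨0, hq⟩).1
  have hb : b = 0 := funext fun j => (key ⟨0, hp⟩ j).2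
  subst ha hb
  ext i
  refine Fin.addCases (fun i => ?_) (fun j => ?_) i <;> simp

end Existence

section Sets

variable (p q : ℕ)

def spacelikeSet (v : Fin (p + q) → ℝ) : Set (Fin (p + q) → ℝ) :=
  {w | formB p q (w - v) (w - v) > 0}

def timelikeSet (v : Fin (p + q) → ℝ) : Set (Fin (p + q) → ℝ) :=
  {w | formB p q (w - v) (w - v) < 0}

def halfSpace (z : Fin (p + q) → ℝ) (α : ℝ) : Set (Fin (p + q) → ℝ) :=
  {w | formB p q z w > α}

def IsIsotropicHalfSpace (U : Set (Fin (p + q) → ℝ)) : Prop :=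
  ∃ z α, z ≠ 0 ∧ formB p q z z = 0 ∧ U = halfSpace p q z α

end Sets

theorem eventually_pos_quadratic {a : ℝ} (ha : 0 < a) (b c : ℝ) :
    ∀ᶠ t in atTop, 0 < a * t ^ 2 + b * t + c := by
  filter_upwards [eventually_ge_atTop ((|b| + |c|) / a + 1)] with t ht
  have h₁ : |b| + |c| ≤ a * (t - 1) := by
    rw [div_add_one ha.ne', div_le_iff₀ ha] at ht; linarith
  have h₂ : 1 ≤ t := le_trans (le_add_of_nonneg_left (by positivity)) ht
  nlinarith [neg_abs_le b, neg_abs_le c, abs_nonneg c]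

section Meet

variable {p q : ℕ}

theorem eventually_mem_spacelikeSet {e : Fin (p + q) → ℝ} (he : 0 < formB p q e e)
    (x v : Fin (p + q) → ℝ) : ∀ᶠ t : ℝ in atTop, x + t • e ∈ spacelikeSet p q v := by
  filter_upwards [eventually_pos_quadratic he (2 * formB p q (x - v) e)
    (formB p q (x - v) (x - v))] with t ht
  rwa [spacelikeSet, Set.mem_ofPred_eq, add_sub_right_comm, formB_add_smul_self]

theorem eventually_mem_timelikeSet {e : Fin (p + q) → ℝ} (he : formB p q e e < 0)
    (x v : Fin (p + q) → ℝ) : ∀ᶠ t : ℝ in atTop, x + t • e ∈ timelikeSet p q v := by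
  filter_upwards [eventually_pos_quadratic (neg_pos.2 he) (-(2 * formB p q (x - v) e))
    (-formB p q (x - v) (x - v))] with t ht
  rw [timelikeSet, Set.mem_ofPred_eq, add_sub_right_comm, formB_add_smul_self]
  linarith

theorem spacelikeSet_inter_spacelikeSet_nonempty (hq : 2 ≤ q) (u v : Fin (p + q) → ℝ) :
    (spacelikeSet p q u ∩ spacelikeSet p q v).Nonempty := by
  obtain ⟨e, -, he⟩ := exists_formB_eq_zero_and_pos hq 0
  obtain ⟨t, ht⟩ := ((eventually_mem_spacelikeSet he 0 u).and
    (eventually_mem_spacelikeSet he 0 v)).exists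
  exact ⟨_, ht⟩

theorem timelikeSet_inter_timelikeSet_nonempty (hp : 2 ≤ p) (u v : Fin (p + q) → ℝ) :
    (timelikeSet p q u ∩ timelikeSet p q v).Nonempty := by
  obtain ⟨e, -, he⟩ := exists_formB_eq_zero_and_neg hp 0
  obtain ⟨t, ht⟩ := ((eventually_mem_timelikeSet he 0 u).and
    (eventually_mem_timelikeSet he 0 v)).exists
  exact ⟨_, ht⟩

theorem add_smul_mem_halfSpace {z x e : Fin (p + q) → ℝ} {α : ℝ} (hx : α < formB p q z x)
    (he : formB p q z e = 0) (t : ℝ) : x + t • e ∈ halfSpace p q z α := by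
  simpa [halfSpace, formB_add_right, formB_smul_right, he] using hx

theorem halfSpace_inter_spacelikeSet_nonempty (hq : 2 ≤ q) {z : Fin (p + q) → ℝ} (hz : z ≠ 0)
    (α : ℝ) (v : Fin (p + q) → ℝ) : (halfSpace p q z α ∩ spacelikeSet p q v).Nonempty := by
  obtain ⟨x, hx⟩ := formB_surjective hz (α + 1)
  obtain ⟨e, hze, he⟩ := exists_formB_eq_zero_and_pos hq z
  obtain ⟨t, ht⟩ := (eventually_mem_spacelikeSet he x v).exists
  exact ⟨_, add_smul_mem_halfSpace (by linarith) hze t, ht⟩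

theorem halfSpace_inter_timelikeSet_nonempty (hp : 2 ≤ p) {z : Fin (p + q) → ℝ} (hz : z ≠ 0)
    (α : ℝ) (v : Fin (p + q) → ℝ) : (halfSpace p q z α ∩ timelikeSet p q v).Nonempty := by
  obtain ⟨x, hx⟩ := formB_surjective hz (α + 1)
  obtain ⟨e, hze, he⟩ := exists_formB_eq_zero_and_neg hp z
  obtain ⟨t, ht⟩ := (eventually_mem_timelikeSet he x v).exists
  exact ⟨_, add_smul_mem_halfSpace (by linarith) hze t, ht⟩

theorem spacelikeSet_inter_timelikeSet_nonempty (hp : 2 ≤ p) (hq : 1 ≤ q)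
    {u v : Fin (p + q) → ℝ} (huv : u ≠ v) :
    (spacelikeSet p q u ∩ timelikeSet p q v).Nonempty := by
  obtain ⟨z, hzz, hz⟩ := exists_isotropic_formB_ne_zero (by omega) hq (sub_ne_zero.2 huv.symm)
  obtain ⟨e, hze, he⟩ := exists_formB_eq_zero_and_neg hp z
  -- along the isotropic line `v + e + t • z`, the form relative to `v` stays `formB e e < 0`
  -- while the form relative to `u` is affine in `t` with nonzero slope
  set w := v - u + e
  have hwz : formB p q w z = formB p q (v - u) z := by
    rw [formB_add_left, formB_comm e, hze, add_zero]
  set t := (1 - formB p q w w) / (2 * formB p q w z) with ht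
  refine ⟨v + e + t • z, ?_, ?_⟩
  · have hslope : formB p q w z ≠ 0 := by rwa [hwz, formB_comm]
    have : v + e + t • z - u = w + t • z := by simp only [w]; abel
    have hval : formB p q (w + t • z) (w + t • z) = 1 := by
      rw [formB_add_smul_self, hzz, ht]
      field_simp
      ring
    simp [spacelikeSet, this, hval]
  · have : v + e + t • z - v = e + t • z := by abel
    simpa [timelikeSet, this, formB_add_smul_self, hzz, formB_comm e, hze] using he

theorem exists_nonpos_smul_of_disjoint {V : Type*} [AddCommGroup V] [Module ℝ V]
    {f g : V →ₗ[ℝ] ℝ} (hf : f ≠ 0) {α β : ℝ}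
    (h : Disjoint {x | α < f x} {x | β < g x}) : ∃ c : ℝ, c ≤ 0 ∧ g = c • f := by
  obtain ⟨u, hu⟩ := LinearMap.surjective_of_ne_zero hf 1
  have hmeet : ∀ x, α < f x → g x ≤ β := fun x hx =>
    not_lt.1 fun hg => Set.disjoint_left.1 h hx hg
  have hker : ∀ y, f y = 0 → g y = 0 := by
    intro y hy
    by_contra hgy
    -- on the line `(α + 1) • u + t • y`, `f` stays `α + 1` while `g` takes every value
    have := hmeet ((α + 1) • u + ((β + 1 - (α + 1) * g u) / g y) • y) (by simp [hu, hy])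
    simp only [map_add, map_smul, smul_eq_mul] at this
    field_simp at this
    linarith
  refine ⟨g u, not_lt.1 fun hc => ?_, LinearMap.ext fun x => ?_⟩
  · have := hmeet ((max α (β / g u) + 1) • u)
      (by simp only [map_smul, hu, smul_eq_mul, mul_one]; linarith [le_max_left α (β / g u)])
    simp only [map_smul, smul_eq_mul] at this
    have := le_max_right α (β / g u)
    rw [div_le_iff₀ hc] at this
    nlinarith
  · have := hker (x - f x • u) (by simp [hu])
    simp only [map_sub, map_smul, smul_eq_mul] at this
    rw [LinearMap.smul_apply, smul_eq_mul]
    linarith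

theorem exists_neg_smul_of_disjoint_halfSpace {z z' : Fin (p + q) → ℝ} (hz : z ≠ 0)
    (hz' : z' ≠ 0) {α β : ℝ} (h : Disjoint (halfSpace p q z α) (halfSpace p q z' β)) :
    ∃ c : ℝ, c < 0 ∧ z' = c • z := by
  obtain ⟨c, hc, hcz⟩ := exists_nonpos_smul_of_disjoint (f := formBₗ p q z) (g := formBₗ p q z')
    (fun h => hz (formBₗ_injective (h.trans (map_zero _).symm))) h
  have hz'c : z' = c • z := formBₗ_injective (by rw [hcz, map_smul])
  refine ⟨c, hc.lt_of_ne ?_, hz'c⟩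
  rintro rfl
  exact hz' (by simpa using hz'c)

end Meet

section Classification

variable {p q : ℕ}

theorem eq_timelikeSet_of_disjoint (hp : 2 ≤ p) (hq : 2 ≤ q) {u : Fin (p + q) → ℝ}
    {V : Set (Fin (p + q) → ℝ)} (hV : InterType p q V) (h : Disjoint (spacelikeSet p q u) V) :
    V = timelikeSet p q u := by
  rcases hV with ⟨v, rfl⟩ | ⟨v, rfl⟩ | ⟨z, α, hz, -, rfl⟩
  · exact absurd h (Set.not_disjoint_iff_nonempty_inter.2
      (spacelikeSet_inter_spacelikeSet_nonempty hq u v))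
  · obtain rfl | huv := eq_or_ne u v
    · rfl
    · exact absurd h (Set.not_disjoint_iff_nonempty_inter.2
        (spacelikeSet_inter_timelikeSet_nonempty hp (by omega) huv))
  · exact absurd h.symm (Set.not_disjoint_iff_nonempty_inter.2
      (halfSpace_inter_spacelikeSet_nonempty hq hz α u))

theorem eq_spacelikeSet_of_disjoint (hp : 2 ≤ p) (hq : 2 ≤ q) {u : Fin (p + q) → ℝ}
    {V : Set (Fin (p + q) → ℝ)} (hV : InterType p q V) (h : Disjoint (timelikeSet p q u) V) :
    V = spacelikeSet p q u := by
  rcases hV with ⟨v, rfl⟩ | ⟨v, rfl⟩ | ⟨z, α, hz, -, rfl⟩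
  · obtain rfl | huv := eq_or_ne v u
    · rfl
    · exact absurd h.symm (Set.not_disjoint_iff_nonempty_inter.2
        (spacelikeSet_inter_timelikeSet_nonempty hp (by omega) huv))
  · exact absurd h (Set.not_disjoint_iff_nonempty_inter.2
      (timelikeSet_inter_timelikeSet_nonempty hp u v))
  · exact absurd h.symm (Set.not_disjoint_iff_nonempty_inter.2
      (halfSpace_inter_timelikeSet_nonempty hp hz α u))

theorem isIsotropicHalfSpace_of_disjoint (hp : 2 ≤ p) (hq : 2 ≤ q)
    {U V : Set (Fin (p + q) → ℝ)} (hU : IsIsotropicHalfSpace p q U) (hV : InterType p q V)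
    (h : Disjoint U V) : IsIsotropicHalfSpace p q V := by
  obtain ⟨z, α, hz, -, rfl⟩ := hU
  rcases hV with ⟨v, rfl⟩ | ⟨v, rfl⟩ | hV
  · exact absurd h (Set.not_disjoint_iff_nonempty_inter.2
      (halfSpace_inter_spacelikeSet_nonempty hq hz α v))
  · exact absurd h (Set.not_disjoint_iff_nonempty_inter.2
      (halfSpace_inter_timelikeSet_nonempty hp hz α v))
  · exact hV

end Classification

section Topology

variable {p q : ℕ}

@[fun_prop]
theorem Continuous.formB {X : Type*} [TopologicalSpace X] {f g : X → Fin (p + q) → ℝ}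
    (hf : Continuous f) (hg : Continuous g) : Continuous fun x => formB p q (f x) (g x) := by
  unfold _root_.formB
  exact continuous_finsetSum _ fun i _ => by split_ifs <;> fun_prop

/-- Each `(a, b)` is joined to `(0, b)` by a segment inside the set, and `{0} × (ℝᵏ \ {0})` is
path connected as `k ≥ 2`. -/
theorem isPathConnected_setOf_dotProduct_lt (m : ℕ) {k : ℕ} (hk : 2 ≤ k) :
    IsPathConnected {x : (Fin m → ℝ) × (Fin k → ℝ) | x.1 ⬝ᵥ x.1 < x.2 ⬝ᵥ x.2} := by
  set S := {x : (Fin m → ℝ) × (Fin k → ℝ) | x.1 ⬝ᵥ x.1 < x.2 ⬝ᵥ x.2}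
  set T := ({0} : Set (Fin m → ℝ)) ×ˢ ({0}ᶜ : Set (Fin k → ℝ))
  have hT : IsPathConnected T := (isPathConnected_singleton 0).prod
    (isPathConnected_compl_singleton_of_one_lt_rank (by simp; exact_mod_cast hk) 0)
  have hTS : T ⊆ S := by
    rintro ⟨a, b⟩ ⟨rfl, hb⟩
    simpa [S] using Matrix.dotProduct_self_star_pos_iff.2 hb
  have hmemT : ∀ x ∈ S, ((0 : Fin m → ℝ), x.2) ∈ T := by
    rintro ⟨a, b⟩ hx
    refine ⟨rfl, fun (hb : b = 0) => ?_⟩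
    subst hb
    simpa using (dotProduct_self_star_nonneg a).trans_lt hx
  have hjoin : ∀ x ∈ S, JoinedIn S x (0, x.2) := by
    rintro ⟨a, b⟩ hx
    refine JoinedIn.of_segment_subset fun y ⟨s, t, hs, ht, hst, hy⟩ => ?_
    subst hy
    have ha := dotProduct_self_star_nonneg a
    simp only [star_trivial] at ha
    simp only [S, Set.mem_ofPred_eq, Prod.smul_mk, Prod.mk_add_mk, smul_zero, add_zero,
      ← add_smul, hst, one_smul, smul_dotProduct, dotProduct_smul, smul_eq_mul] at hx ⊢
    nlinarith [mul_le_one₀ (hst ▸ le_add_of_nonneg_right ht) hs (hst ▸ le_add_of_nonneg_right ht)]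
  refine isPathConnected_iff.2 ⟨hT.nonempty.mono hTS, fun x hx y hy => ?_⟩
  exact ((hjoin x hx).trans ((hT.joinedIn _ (hmemT x hx) _ (hmemT y hy)).mono hTS)).trans
    (hjoin y hy).symm

theorem isPathConnected_setOf_formB_pos (hq : 2 ≤ q) :
    IsPathConnected {x : Fin (p + q) → ℝ | 0 < formB p q x x} := by
  have h := (isPathConnected_setOf_dotProduct_lt p hq).image (Fin.continuous_append p q)
  rw [show (fun x => Fin.append x.1 x.2) = Fin.appendEquiv p q from rfl,
    Equiv.image_eq_preimage_symm] at h
  convert h using 1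
  ext x
  obtain ⟨a, b, rfl⟩ := exists_eq_append x
  simp [formB_append]

theorem isPathConnected_setOf_formB_neg (hp : 2 ≤ p) :
    IsPathConnected {x : Fin (p + q) → ℝ | formB p q x x < 0} := by
  have h := (isPathConnected_setOf_dotProduct_lt q hp).image
    ((Fin.continuous_append p q).comp continuous_swap)
  rw [show (fun x => Fin.append x.1 x.2) ∘ Prod.swap =
      (Equiv.prodComm _ _).trans (Fin.appendEquiv p q) from rfl,
    Equiv.image_eq_preimage_symm] at h
  convert h using 1
  ext x
  obtain ⟨a, b, rfl⟩ := exists_eq_append x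
  simp [formB_append]

theorem InterType.isPreconnected (hp : 2 ≤ p) (hq : 2 ≤ q) {U : Set (Fin (p + q) → ℝ)}
    (hU : InterType p q U) : IsPreconnected U := by
  rcases hU with ⟨v, rfl⟩ | ⟨v, rfl⟩ | ⟨z, α, -, -, rfl⟩
  · exact (Homeomorph.subRight v).isPreconnected_preimage.2
      (isPathConnected_setOf_formB_pos hq).isConnected.isPreconnected
  · exact (Homeomorph.subRight v).isPreconnected_preimage.2
      (isPathConnected_setOf_formB_neg hp).isConnected.isPreconnected
  · exact (convex_halfSpace_gt (formBₗ p q z).isLinear α).isPreconnected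

end Topology

section Separation

variable {X ι : Type*} [TopologicalSpace X] {s : ι → Set X}

theorem exists_separation_of_not_isPreconnected_iUnion (hs : ∀ i, IsPreconnected (s i))
    (h : ¬IsPreconnected (⋃ i, s i)) :
    ∃ A : Set ι, ∃ i ∈ A, ∃ j ∉ A, ∀ a ∈ A, ∀ b ∉ A, Disjoint (s a) (s b) := by
  by_contra! hcon
  refine h (IsPreconnected.iUnion_of_reflTransGen hs fun i j => ?_)
  by_contra hij
  obtain ⟨a, ha, b, hb, hab⟩ :=
    hcon {k | Relation.ReflTransGen (fun i j => (s i ∩ s j).Nonempty) i k} i .refl j hij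
  exact hb (ha.tail (Set.not_disjoint_iff_nonempty_inter.1 hab))

theorem not_isPreconnected_iUnion_of_separated {U V : Set X} (hU : IsOpen U) (hV : IsOpen V)
    (hUV : Disjoint U V) (hs : ∀ k, s k ⊆ U ∨ s k ⊆ V) {i j : ι} (hi : (s i).Nonempty)
    (hiU : s i ⊆ U) (hj : (s j).Nonempty) (hjV : s j ⊆ V) : ¬IsPreconnected (⋃ k, s k) := by
  intro h
  obtain ⟨x, -, hxU, hxV⟩ := h U V hU hV
    (Set.iUnion_subset fun k => (hs k).elim (·.trans Set.subset_union_left)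
      (·.trans Set.subset_union_right))
    (hi.mono fun x hx => ⟨Set.mem_iUnion_of_mem i hx, hiU hx⟩)
    (hj.mono fun x hx => ⟨Set.mem_iUnion_of_mem j hx, hjV hx⟩)
  exact Set.disjoint_left.1 hUV hxU hxV

end Separation

theorem Fin.lt_card_filter_iff_of_isLowerSet {l : ℕ} {P : Fin l → Prop} [DecidablePred P]
    (hP : IsLowerSet {i | P i}) (i : Fin l) : (i : ℕ) < #{j | P j} ↔ P i := by
  constructor
  · intro h
    by_contra hi
    have hsub : ({j | P j} : Finset (Fin l)) ⊆ Iio i := fun j hj => by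
      simp only [mem_filter, mem_univ, true_and, mem_Iio] at hj ⊢
      exact lt_of_not_ge fun hij => hi (hP hij hj)
    have := card_le_card hsub
    rw [Fin.card_Iio] at this
    omega
  · intro hi
    have hsub : Iic i ⊆ ({j | P j} : Finset (Fin l)) := fun j hj => by
      simp only [mem_filter, mem_univ, true_and, mem_Iic] at hj ⊢
      exact hP hj hi
    have := card_le_card hsub
    rw [Fin.card_Iic] at this
    omega

theorem exists_perm_blockwise_strictAnti {l : ℕ} (A : Set (Fin l)) (f : Fin l → ℝ)
    (hA : A.InjOn f) (hB : Aᶜ.InjOn f) :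
    ∃ σ : Equiv.Perm (Fin l), ∃ k₀ : ℕ, (∀ i : Fin l, (i : ℕ) < k₀ ↔ σ i ∈ A) ∧
      ∀ i j : Fin l, i < j → ((j : ℕ) < k₀ ∨ k₀ ≤ (i : ℕ)) → f (σ j) < f (σ i) := by
  classical
  let κ : Fin l → ℕ ×ₗ ℝ := fun i => toLex (if i ∈ A then 0 else 1, -f i)
  have hκ : Function.Injective κ := by
    intro i j hij
    simp only [κ, toLex_inj, Prod.mk.injEq, neg_inj] at hij
    by_cases hi : i ∈ A <;> by_cases hj : j ∈ A <;> simp [hi, hj] at hij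
    · exact hA hi hj hij
    · exact hB hi hj hij
  set σ := Tuple.sort κ
  have hmono : StrictMono (κ ∘ σ) :=
    (Tuple.monotone_sort κ).strictMono_of_injective (hκ.comp σ.injective)
  have hlower : IsLowerSet {i | σ i ∈ A} := by
    intro j i hij (hj : σ j ∈ A)
    by_contra hi
    have := hmono.monotone hij
    simp [κ, Prod.Lex.le_iff, hj, show σ i ∉ A from hi] at this
  refine ⟨σ, #{i | σ i ∈ A}, Fin.lt_card_filter_iff_of_isLowerSet hlower, ?_⟩
  intro i j hij hblock
  have hsame : σ i ∈ A ↔ σ j ∈ A := by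
    rw [← Fin.lt_card_filter_iff_of_isLowerSet hlower i,
      ← Fin.lt_card_filter_iff_of_isLowerSet hlower j]
    have : (i : ℕ) < j := hij
    omega
  have := hmono hij
  by_cases hi : σ i ∈ A
  · simpa [κ, Prod.Lex.lt_iff, hi, hsame.1 hi] using this
  · simpa [κ, Prod.Lex.lt_iff, hi, mt hsame.2 hi] using this

section HalfSpaces

variable {p q : ℕ}

theorem halfSpace_smul_of_pos {c : ℝ} (hc : 0 < c) (z : Fin (p + q) → ℝ) (β : ℝ) :
    halfSpace p q (c • z) β = halfSpace p q z (β / c) := by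
  ext w
  simp [halfSpace, formB_smul_left, div_lt_iff₀ hc, mul_comm]

theorem halfSpace_smul_of_neg {c : ℝ} (hc : c < 0) (z : Fin (p + q) → ℝ) (β : ℝ) :
    halfSpace p q (c • z) β = halfSpace p q (-z) (-(β / c)) := by
  ext w
  simp [halfSpace, formB_smul_left, formB_neg_left, lt_div_iff_of_neg hc, mul_comm]

theorem halfSpace_neg_neg (v : Fin (p + q) → ℝ) (α : ℝ) :
    halfSpace p q (-v) (-α) = {w | formB p q v w < α} := by
  ext w
  simp [halfSpace, formB_neg_left]

theorem le_of_disjoint_halfSpace_neg {v : Fin (p + q) → ℝ} (hv : v ≠ 0) {α β : ℝ}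
    (h : Disjoint (halfSpace p q v α) (halfSpace p q (-v) (-β))) : β ≤ α := by
  by_contra! hlt
  obtain ⟨x, hx⟩ := formB_surjective hv ((α + β) / 2)
  rw [halfSpace_neg_neg] at h
  exact Set.disjoint_left.1 h (show α < formB p q v x by linarith)
    (show formB p q v x < β by linarith)

theorem exists_thresholds_of_separated_halfSpaces {l : ℕ} {z : Fin l → Fin (p + q) → ℝ}
    {a : Fin l → ℝ} (hz : ∀ k, z k ≠ 0) {A : Set (Fin l)} {i₀ j₀ : Fin l} (hi₀ : i₀ ∈ A)
    (hj₀ : j₀ ∉ A)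
    (hsep : ∀ x ∈ A, ∀ y ∉ A, Disjoint (halfSpace p q (z x) (a x)) (halfSpace p q (z y) (a y))) :
    ∃ f : Fin l → ℝ, (∀ k ∈ A, halfSpace p q (z k) (a k) = halfSpace p q (z i₀) (f k)) ∧
      ∀ k ∉ A, halfSpace p q (z k) (a k) = halfSpace p q (-z i₀) (-f k) := by
  have hdir : ∀ k, ∃ d : ℝ, (k ∈ A → 0 < d) ∧ (k ∉ A → d < 0) ∧ z k = d • z i₀ := by
    intro k
    by_cases hk : k ∈ A
    · obtain ⟨c₁, hc₁, h₁⟩ := exists_neg_smul_of_disjoint_halfSpace (hz k) (hz j₀)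
        (hsep k hk j₀ hj₀)
      obtain ⟨c₂, hc₂, h₂⟩ := exists_neg_smul_of_disjoint_halfSpace (hz i₀) (hz j₀)
        (hsep i₀ hi₀ j₀ hj₀)
      refine ⟨c₂ / c₁, fun _ => div_pos_of_neg_of_neg hc₂ hc₁, fun h => (h hk).elim, ?_⟩
      rw [div_eq_inv_mul, mul_smul, ← h₂, h₁, smul_smul, inv_mul_cancel₀ hc₁.ne, one_smul]
    · obtain ⟨c, hc, h⟩ := exists_neg_smul_of_disjoint_halfSpace (hz i₀) (hz k)
        (hsep i₀ hi₀ k hk)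
      exact ⟨c, fun h' => (hk h').elim, fun _ => hc, h⟩
  choose d hdA hdB hzd using hdir
  refine ⟨fun k => a k / d k, fun k hk => ?_, fun k hk => ?_⟩
  · rw [hzd k, halfSpace_smul_of_pos (hdA k hk)]
  · rw [hzd k, halfSpace_smul_of_neg (hdB k hk)]

end HalfSpaces

section Configurations

variable (p q : ℕ) {l : ℕ}

def IsSeparatedHalfSpaceFamily (W : Fin l → Set (Fin (p + q) → ℝ)) : Prop :=
  ∃ v : Fin (p + q) → ℝ, v ≠ 0 ∧ formB p q v v = 0 ∧
    ∃ α : Fin l → ℝ, ∃ σ : Equiv.Perm (Fin l), ∃ k₀ : ℕ,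
      1 ≤ k₀ ∧ k₀ ≤ l - 1 ∧
      (∀ i j : Fin l, i < j → ((j : ℕ) < k₀ ∨ k₀ ≤ (i : ℕ)) → α j < α i) ∧
      (∀ i j : Fin l, (i : ℕ) < k₀ → k₀ ≤ (j : ℕ) → α j ≤ α i) ∧
      ∀ i : Fin l, W (σ i) =
        if (i : ℕ) < k₀ then halfSpace p q v (α i) else halfSpace p q (-v) (-(α i))

def IsLightConePair (W : Fin l → Set (Fin (p + q) → ℝ)) : Prop :=
  l = 2 ∧ ∃ v : Fin (p + q) → ℝ, ∃ i j : Fin l, i ≠ j ∧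
    W i = spacelikeSet p q v ∧ W j = timelikeSet p q v

variable {p q} {W : Fin l → Set (Fin (p + q) → ℝ)}

theorem IsSeparatedHalfSpaceFamily.not_isPreconnected (hW : IsSeparatedHalfSpaceFamily p q W)
    (hne : ∀ i, (W i).Nonempty) : ¬IsPreconnected (⋃ i, W i) := by
  obtain ⟨v, -, -, α, σ, k₀, hk₁, hk₂, hstrict, hcross, hW⟩ := hW
  set m : Fin l := ⟨k₀ - 1, by omega⟩
  have hm : (m : ℕ) < k₀ := by simp only [m]; omega
  have hbelow : ∀ i : Fin l, (i : ℕ) < k₀ → W (σ i) ⊆ {w | α m < formB p q v w} := by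
    intro i hi w hw
    rw [hW, if_pos hi] at hw
    have : α m ≤ α i := by
      obtain h | h := eq_or_lt_of_le (show (i : ℕ) ≤ m by simp only [m]; omega)
      · rw [Fin.ext h]
      · exact (hstrict i m h (.inl hm)).le
    exact this.trans_lt hw
  have habove : ∀ i : Fin l, k₀ ≤ (i : ℕ) → W (σ i) ⊆ {w | formB p q v w < α m} := by
    intro i hi w hw
    rw [hW, if_neg (by omega), halfSpace_neg_neg] at hw
    exact hw.trans_le (hcross m i hm hi)
  refine not_isPreconnected_iUnion_of_separated (isOpen_lt continuous_const (by fun_prop))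
    (isOpen_lt (by fun_prop) continuous_const)
    (Set.disjoint_left.2 fun w h₁ h₂ => lt_asymm h₁ h₂) (fun k => ?_)
    (hne (σ ⟨0, by omega⟩)) (hbelow _ (by simp only; omega))
    (hne (σ ⟨l - 1, by omega⟩)) (habove _ (by simp only; omega))
  rw [← σ.apply_symm_apply k]
  by_cases h : (σ.symm k : ℕ) < k₀
  · exact .inl (hbelow _ h)
  · exact .inr (habove _ (not_lt.1 h))

theorem IsLightConePair.not_isPreconnected (hW : IsLightConePair p q W)
    (hne : ∀ i, (W i).Nonempty) : ¬IsPreconnected (⋃ i, W i) := by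
  obtain ⟨rfl, v, i, j, hij, hi, hj⟩ := hW
  refine not_isPreconnected_iUnion_of_separated (isOpen_lt continuous_const (by fun_prop))
    (isOpen_lt (by fun_prop) continuous_const)
    (Set.disjoint_left.2 fun w h₁ h₂ => lt_asymm h₁ h₂) (fun k => ?_)
    (hne i) hi.subset (hne j) hj.subset
  obtain rfl | rfl : k = i ∨ k = j := by
    have := Fin.val_ne_of_ne hij
    rw [Fin.ext_iff, Fin.ext_iff]
    omega
  · exact .inl hi.subset
  · exact .inr hj.subset

end Configurations

section Forward

variable {p q l : ℕ} {W : Fin l → Set (Fin (p + q) → ℝ)} {A : Set (Fin l)} {i₀ j₀ : Fin l}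

theorem isLightConePair_of_separation (hp : 2 ≤ p) (hq : 2 ≤ q) (hdist : Function.Injective W)
    (htype : ∀ k, InterType p q (W k)) (hi₀ : i₀ ∈ A) (hj₀ : j₀ ∉ A)
    (hsep : ∀ a ∈ A, ∀ b ∉ A, Disjoint (W a) (W b)) {u : Fin (p + q) → ℝ}
    (hu : W i₀ = spacelikeSet p q u) : IsLightConePair p q W := by
  classical
  have hB : ∀ b ∉ A, W b = timelikeSet p q u := fun b hb =>
    eq_timelikeSet_of_disjoint hp hq (htype b) (hu ▸ hsep i₀ hi₀ b hb)
  have hA : ∀ a ∈ A, W a = spacelikeSet p q u := fun a ha =>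
    eq_spacelikeSet_of_disjoint hp hq (htype a) (hB j₀ hj₀ ▸ (hsep a ha j₀ hj₀).symm)
  have hne : i₀ ≠ j₀ := fun h => hj₀ (h ▸ hi₀)
  have huniv : (univ : Finset (Fin l)) = {i₀, j₀} := by
    ext k
    simp only [mem_univ, mem_insert, mem_singleton, true_iff]
    by_cases hk : k ∈ A
    · exact .inl (hdist ((hA k hk).trans (hA i₀ hi₀).symm))
    · exact .inr (hdist ((hB k hk).trans (hB j₀ hj₀).symm))
  refine ⟨?_, u, i₀, j₀, hne, hu, hB j₀ hj₀⟩
  simpa [card_pair hne] using congrArg card huniv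

theorem isSeparatedHalfSpaceFamily_of_separation (hp : 2 ≤ p) (hq : 2 ≤ q)
    (hdist : Function.Injective W) (htype : ∀ k, InterType p q (W k)) (hi₀ : i₀ ∈ A)
    (hj₀ : j₀ ∉ A) (hsep : ∀ a ∈ A, ∀ b ∉ A, Disjoint (W a) (W b))
    (hH : IsIsotropicHalfSpace p q (W i₀)) : IsSeparatedHalfSpaceFamily p q W := by
  have hHB : ∀ b ∉ A, IsIsotropicHalfSpace p q (W b) := fun b hb =>
    isIsotropicHalfSpace_of_disjoint hp hq hH (htype b) (hsep i₀ hi₀ b hb)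
  have hHall : ∀ k, IsIsotropicHalfSpace p q (W k) := fun k => by
    by_cases hk : k ∈ A
    · exact isIsotropicHalfSpace_of_disjoint hp hq (hHB j₀ hj₀) (htype k) (hsep k hk j₀ hj₀).symm
    · exact hHB k hk
  choose z a hz hzz hW using hHall
  obtain ⟨f, hfA, hfB⟩ := exists_thresholds_of_separated_halfSpaces hz hi₀ hj₀
    fun x hx y hy => hW x ▸ hW y ▸ hsep x hx y hy
  have hWA : ∀ k ∈ A, W k = halfSpace p q (z i₀) (f k) := fun k hk => (hW k).trans (hfA k hk)
  have hWB : ∀ k ∉ A, W k = halfSpace p q (-z i₀) (-f k) := fun k hk => (hW k).trans (hfB k hk)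
  have hcross : ∀ i ∈ A, ∀ j ∉ A, f j ≤ f i := fun i hi j hj =>
    le_of_disjoint_halfSpace_neg (hz i₀) (hWA i hi ▸ hWB j hj ▸ hsep i hi j hj)
  obtain ⟨σ, k₀, hσ, hsorted⟩ := exists_perm_blockwise_strictAnti A f
    (fun i hi j hj hij => hdist ((hWA i hi).trans (hij ▸ (hWA j hj).symm)))
    (fun i hi j hj hij => hdist ((hWB i hi).trans (hij ▸ (hWB j hj).symm)))
  refine ⟨z i₀, hz i₀, hzz i₀, f ∘ σ, σ, k₀, ?_, ?_, hsorted,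
    fun i j hi hj => hcross _ ((hσ i).1 hi) _ fun h => not_lt.2 hj ((hσ j).2 h), fun i => ?_⟩
  · have := (hσ (σ.symm i₀)).2 (by simpa using hi₀)
    omega
  · have := mt (hσ (σ.symm j₀)).1 (by simpa using hj₀)
    have := (σ.symm j₀).2
    omega
  · split_ifs with h
    · exact hWA _ ((hσ i).1 h)
    · exact hWB _ (mt (hσ i).2 h)

end Forward

/-- Classification of disconnected finite unions of pairwise distinct nonempty open sets
of intersection type in `ℝ^{p,q}`, `p, q ≥ 2`: the union is disconnected iff either the
sets are, up to permutation, half-spaces `H_{v,α₁}, …, H_{v,α_{k₀}}` and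
`H_{-v,-α_{k₀+1}}, …, H_{-v,-α_l}` with `α₁ > ⋯ > α_{k₀} ≥ α_{k₀+1} > ⋯ > α_l`, or
`l = 2` and the two sets are `v + U_S` and `v + U_T` for some `v`. -/
theorem disconnected_union_classification (p q : ℕ) (hp : 2 ≤ p) (hq : 2 ≤ q)
    (l : ℕ) (hl : 2 ≤ l) (W : Fin l → Set (Fin (p + q) → ℝ))
    (hdist : Function.Injective W) (hne : ∀ i, (W i).Nonempty)
    (htype : ∀ i, InterType p q (W i)) :
    ¬ IsConnected (⋃ i, W i) ↔
      ((∃ v : Fin (p + q) → ℝ, v ≠ 0 ∧ formB p q v v = 0 ∧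
          ∃ α : Fin l → ℝ, ∃ σ : Equiv.Perm (Fin l), ∃ k₀ : ℕ,
            1 ≤ k₀ ∧ k₀ ≤ l - 1 ∧
            (∀ i j : Fin l, i < j → ((j : ℕ) < k₀ ∨ k₀ ≤ (i : ℕ)) → α j < α i) ∧
            (∀ i j : Fin l, (i : ℕ) < k₀ → k₀ ≤ (j : ℕ) → α j ≤ α i) ∧
            (∀ i : Fin l, W (σ i) =
              if (i : ℕ) < k₀ then {w | formB p q v w > α i}
              else {w | formB p q (-v) w > -(α i)})) ∨
        (l = 2 ∧ ∃ v : Fin (p + q) → ℝ, ∃ i j : Fin l, i ≠ j ∧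
          W i = {w | formB p q (w - v) (w - v) > 0} ∧
          W j = {w | formB p q (w - v) (w - v) < 0})) := by
  change _ ↔ IsSeparatedHalfSpaceFamily p q W ∨ IsLightConePair p q W
  constructor
  · intro hdisc
    have hunion : (⋃ i, W i).Nonempty := (hne ⟨0, by omega⟩).mono (Set.subset_iUnion W _)
    obtain ⟨A, i₀, hi₀, j₀, hj₀, hsep⟩ := exists_separation_of_not_isPreconnected_iUnion
      (fun i => (htype i).isPreconnected hp hq) fun h => hdisc ⟨hunion, h⟩
    rcases htype i₀ with ⟨u, hu⟩ | ⟨u, hu⟩ | hH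
    · exact .inr (isLightConePair_of_separation hp hq hdist htype hi₀ hj₀ hsep hu)
    · have hj₀S := eq_spacelikeSet_of_disjoint hp hq (htype j₀)
        ((hu : W i₀ = timelikeSet p q u) ▸ hsep i₀ hi₀ j₀ hj₀)
      exact .inr (isLightConePair_of_separation hp hq hdist htype hj₀ (not_not.2 hi₀)
        (fun a ha b hb => (hsep b (not_not.1 hb) a ha).symm) hj₀S)
    · exact .inl (isSeparatedHalfSpaceFamily_of_separation hp hq hdist htype hi₀ hj₀ hsep hH)
  · rintro (h | h) hconn
    · exact h.not_isPreconnected hne hconn.isPreconnected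
    · exact h.not_isPreconnected hne hconn.isPreconnected
end
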